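/- arXiv:1302.1186 — 5 statements merged into one kernel-verified Lean document; each statement's English description precedes it below -/
import Mathlib

section
/- Let G be a finite group acting transitively on a finite set Ω with point stabilizer H, and let d_H be the minimum degree of a nontrivial irreducible component of the permutation representation 1_H^G. If X is a probability distribution on G and Y is a probability distribution on Ω, then ‖X ∗ Y − U_Ω‖ ≤ √(|G|/d_H) · ‖X − U_G‖ · ‖Y − U_Ω‖. -/
open scoped BigOperators

/-- The convolution of a function on a finite group `G` with a function on a
`G`-set `Ω`: `(X ∗ Y)(ω) = ∑_{g ∈ G} X(g) Y(g⁻¹ • ω)`. -/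
noncomputable def convAct {G : Type*} [Group G] [Fintype G] {Ω : Type*} [MulAction G Ω]
    (X : G → ℝ) (Y : Ω → ℝ) : Ω → ℝ :=
  fun ω => ∑ g : G, X g * Y (g⁻¹ • ω)

/-- The Euclidean norm of a function on a finite set. -/
noncomputable def norm2 {Ω : Type*} [Fintype Ω] (f : Ω → ℝ) : ℝ :=
  Real.sqrt (∑ ω : Ω, f ω ^ 2)

/-- A subspace of `ℝ^Ω` invariant under the permutation action of `G`. -/
def PermInvariant (G : Type*) [Group G] {Ω : Type*} [MulAction G Ω]
    (p : Submodule ℝ (Ω → ℝ)) : Prop :=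
  ∀ (g : G) (f : Ω → ℝ), f ∈ p → (fun ω => f (g⁻¹ • ω)) ∈ p

/-- A nontrivial irreducible component of the permutation representation of `G` on `ℝ^Ω`:
a nonzero invariant subspace with no proper nonzero invariant subspace, on which `G`
acts nontrivially. -/
def IsNontrivIrredComponent (G : Type*) [Group G] {Ω : Type*} [MulAction G Ω]
    (p : Submodule ℝ (Ω → ℝ)) : Prop :=
  PermInvariant G p ∧ p ≠ ⊥ ∧
    (∀ q : Submodule ℝ (Ω → ℝ), q ≤ p → PermInvariant G q → q = ⊥ ∨ q = p) ∧
    (∃ (g : G) (f : Ω → ℝ), f ∈ p ∧ (fun ω => f (g⁻¹ • ω)) ≠ f)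

/-!
Fix `Y` with `∑ Y = 0` and let `S x = x ∗ Y`, a linear map `ℝ^G → ℝ^Ω` commuting with the
translation actions of `G`, which are isometries. Hence every eigenspace `K` of `SᵀS` is
`G`-invariant, and for an eigenvalue `μ > 0` its image `S K` is a nonzero `G`-invariant space of
sum-zero functions on `Ω`. By transitivity the only invariant sum-zero functions are `0`, so a
minimal invariant subspace of `S K` is a nontrivial irreducible component, whence
`d ≤ dim S K ≤ dim K`. As `SᵀS` is positive, `μ · dim K ≤ tr (SᵀS) = |G| ‖Y‖²`. So all eigenvalues
of `SᵀS` are at most `|G| ‖Y‖² / d`, i.e. `‖X ∗ Y‖² ≤ (|G| / d) ‖X‖² ‖Y‖²`. The theorem is this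
bound for `X - U_G` and `Y - U_Ω`, because transitivity gives
`X ∗ Y - U_Ω = (X - U_G) ∗ (Y - U_Ω)` whenever `X` and `Y` have total mass `1`.
-/

open scoped RealInnerProductSpace
open Module End

namespace LinearMap

variable {E F : Type*} [NormedAddCommGroup E] [InnerProductSpace ℝ E] [FiniteDimensional ℝ E]
  [NormedAddCommGroup F] [InnerProductSpace ℝ F] [FiniteDimensional ℝ F]

theorem IsSymmetric.inner_apply_self_le_of_hasEigenvalue_le {T : E →ₗ[ℝ] E}
    (hT : T.IsSymmetric) {C : ℝ} (hC : ∀ μ, HasEigenvalue T μ → μ ≤ C) (x : E) :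
    ⟪T x, x⟫ ≤ C * ‖x‖ ^ 2 := by
  let b := hT.eigenvectorBasis rfl
  calc ⟪T x, x⟫ = ∑ i, hT.eigenvalues rfl i * ⟪b i, x⟫ ^ 2 := by
        rw [← b.sum_inner_mul_inner]
        refine Finset.sum_congr rfl fun i _ => ?_
        rw [hT x (b i), hT.apply_eigenvectorBasis, real_inner_smul_right, real_inner_comm x]
        simp only [RCLike.ofReal_real_eq_id, id_eq]
        ring
    _ ≤ ∑ i, C * ⟪b i, x⟫ ^ 2 :=
        Finset.sum_le_sum fun i _ =>
          mul_le_mul_of_nonneg_right (hC _ (hT.hasEigenvalue_eigenvalues rfl i)) (sq_nonneg _)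
    _ = C * ‖x‖ ^ 2 := by rw [← Finset.mul_sum, b.sum_sq_inner_right]

theorem IsPositive.mul_finrank_eigenspace_le_trace {T : E →ₗ[ℝ] E} (hT : T.IsPositive)
    (μ : ℝ) : μ * finrank ℝ (eigenspace T μ) ≤ trace ℝ E T := by
  set ev := hT.isSymmetric.eigenvalues rfl
  rw [hT.isSymmetric.trace_eq_sum_eigenvalues rfl, ← hT.isSymmetric.card_filter_eigenvalues_eq rfl,
    mul_comm, ← nsmul_eq_mul, ← Finset.sum_const, RCLike.ofReal_real_eq_id, id_eq]
  calc ∑ _ ∈ {i | ev i = μ}, μ = ∑ i ∈ {i | ev i = μ}, ev i :=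
        Finset.sum_congr rfl fun i hi => (Finset.mem_filter.mp hi).2.symm
    _ ≤ ∑ i, ev i :=
        Finset.sum_le_sum_of_subset_of_nonneg (Finset.subset_univ _) fun i _ _ =>
          hT.nonneg_eigenvalues rfl i

theorem map_mem_eigenspace_adjoint_comp_self {S : E →ₗ[ℝ] F} (τ : E ≃ₗᵢ[ℝ] E)
    (σ : F →ₗᵢ[ℝ] F) (hS : ∀ x, S (τ x) = σ (S x)) {μ : ℝ} {x : E}
    (hx : x ∈ eigenspace (adjoint S ∘ₗ S) μ) : τ x ∈ eigenspace (adjoint S ∘ₗ S) μ := by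
  rw [mem_eigenspace_iff] at hx ⊢
  refine ext_inner_right ℝ fun y => ?_
  obtain ⟨z, rfl⟩ := τ.surjective y
  calc ⟪(adjoint S ∘ₗ S) (τ x), τ z⟫ = ⟪(adjoint S ∘ₗ S) x, z⟫ := by
        simp only [comp_apply, adjoint_inner_left, hS, LinearIsometry.inner_map_map]
    _ = ⟪μ • τ x, τ z⟫ := by
        rw [hx, real_inner_smul_left, real_inner_smul_left, LinearIsometryEquiv.inner_map_map]

end LinearMap

section PermutationRepresentation

open LinearMap

variable {G : Type*} [Group G] {Ω : Type*} [MulAction G Ω]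

noncomputable def permIsometry {α : Type*} [Fintype α] [MulAction G α] (g : G) :
    EuclideanSpace ℝ α ≃ₗᵢ[ℝ] EuclideanSpace ℝ α :=
  LinearIsometryEquiv.piLpCongrLeft 2 ℝ ℝ (MulAction.toPerm g)

@[simp]
theorem permIsometry_apply {α : Type*} [Fintype α] [MulAction G α] (g : G)
    (x : EuclideanSpace ℝ α) (a : α) : permIsometry g x a = x (g⁻¹ • a) :=
  rfl

theorem eq_zero_of_forall_inv_smul_eq [Fintype Ω] [MulAction.IsPretransitive G Ω]
    {f : Ω → ℝ} (hf : ∀ g : G, (fun ω => f (g⁻¹ • ω)) = f) (hsum : ∑ ω, f ω = 0) : f = 0 := by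
  funext ω
  have hconst : ∀ ω', f ω' = f ω := fun ω' => by
    obtain ⟨g, rfl⟩ := MulAction.exists_smul_eq G ω ω'
    simpa using congr_fun (hf g⁻¹) ω
  have hcard : (Fintype.card Ω : ℝ) ≠ 0 := by
    have : Nonempty Ω := ⟨ω⟩
    positivity
  simp only [hconst, Finset.sum_const, Finset.card_univ, nsmul_eq_mul, mul_eq_zero] at hsum
  exact hsum.resolve_left hcard

theorem exists_isNontrivIrredComponent_le [Fintype Ω] [MulAction.IsPretransitive G Ω]
    {p : Submodule ℝ (Ω → ℝ)} (hp : PermInvariant G p) (hp0 : p ≠ ⊥)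
    (hsum : ∀ f ∈ p, ∑ ω, f ω = 0) : ∃ q ≤ p, IsNontrivIrredComponent G q := by
  obtain ⟨q, hqp, ⟨hq, hq0⟩, hmin⟩ :=
    exists_minimal_le_of_wellFoundedLT (fun q => PermInvariant G q ∧ q ≠ ⊥) p ⟨hp, hp0⟩
  refine ⟨q, hqp, hq, hq0, fun r hrq hr => ?_, ?_⟩
  · by_cases hr0 : r = ⊥
    · exact Or.inl hr0
    · exact Or.inr (le_antisymm hrq (hmin ⟨hr, hr0⟩ hrq))
  · by_contra! hfix
    refine hq0 ((Submodule.eq_bot_iff q).mpr fun f hf => ?_)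
    exact eq_zero_of_forall_inv_smul_eq (fun g => hfix g f hf) (hsum f (hqp hf))

variable [Fintype G]

variable (G) in
noncomputable def convOp (Y : Ω → ℝ) : EuclideanSpace ℝ G →ₗ[ℝ] EuclideanSpace ℝ Ω where
  toFun x := WithLp.toLp 2 (convAct x Y)
  map_add' x y := by
    ext ω
    simp [convAct, add_mul, Finset.sum_add_distrib]
  map_smul' c x := by
    ext ω
    simp [convAct, Finset.mul_sum, mul_assoc]

@[simp]
theorem convOp_apply (Y : Ω → ℝ) (x : EuclideanSpace ℝ G) (ω : Ω) :
    convOp G Y x ω = convAct x Y ω :=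
  rfl

variable [Fintype Ω]

theorem card_nsmul_sum_inv_smul [MulAction.IsPretransitive G Ω] {M : Type*} [AddCommMonoid M]
    (f : Ω → M) (ω : Ω) :
    Fintype.card Ω • ∑ g : G, f (g⁻¹ • ω) = Fintype.card G • ∑ ω, f ω := by
  have hconst : ∀ ω', ∑ g : G, f (g⁻¹ • ω') = ∑ g : G, f (g⁻¹ • ω) := fun ω' => by
    obtain ⟨h, rfl⟩ := MulAction.exists_smul_eq G ω ω'
    exact Fintype.sum_equiv (Equiv.mulLeft h⁻¹) _ _ fun g => by simp [mul_smul]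
  calc Fintype.card Ω • ∑ g : G, f (g⁻¹ • ω) = ∑ ω', ∑ g : G, f (g⁻¹ • ω') := by
        simp [hconst]
    _ = ∑ g : G, ∑ ω', f (g⁻¹ • ω') := Finset.sum_comm
    _ = ∑ _g : G, ∑ ω', f ω' :=
        Fintype.sum_congr _ _ fun g => Equiv.sum_comp (MulAction.toPerm g⁻¹ : Equiv.Perm Ω) f
    _ = Fintype.card G • ∑ ω, f ω := by rw [Finset.sum_const, Finset.card_univ]

theorem convAct_sub_inv_card [MulAction.IsPretransitive G Ω] {X : G → ℝ}
    (hX1 : ∑ g : G, X g = 1) {Y : Ω → ℝ} (hY1 : ∑ ω : Ω, Y ω = 1) (ω : Ω) :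
    convAct X Y ω - 1 / (Fintype.card Ω : ℝ) =
      convAct (fun g => X g - 1 / (Fintype.card G : ℝ))
        (fun ω => Y ω - 1 / (Fintype.card Ω : ℝ)) ω := by
  have hΩ : (Fintype.card Ω : ℝ) ≠ 0 := by
    have : Nonempty Ω := ⟨ω⟩
    positivity
  have hcol : ∑ g : G, Y (g⁻¹ • ω) = Fintype.card G / Fintype.card Ω := by
    have := card_nsmul_sum_inv_smul (G := G) Y ω
    rw [hY1, nsmul_eq_mul, nsmul_eq_mul, mul_one] at this
    field_simp
    linarith
  simp only [convAct, sub_mul, mul_sub, Finset.sum_sub_distrib, ← Finset.sum_mul,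
    ← Finset.mul_sum, hX1, hcol, Finset.sum_const, Finset.card_univ, nsmul_eq_mul]
  field_simp
  ring

theorem sum_convAct (X : G → ℝ) (Y : Ω → ℝ) :
    ∑ ω, convAct X Y ω = (∑ g, X g) * ∑ ω, Y ω := by
  rw [Finset.sum_mul_sum]
  simp only [convAct]
  rw [Finset.sum_comm]
  exact Fintype.sum_congr _ _ fun g =>
    Equiv.sum_comp (MulAction.toPerm g⁻¹ : Equiv.Perm Ω) (fun ω => X g * Y ω)

theorem convOp_permIsometry (Y : Ω → ℝ) (g : G) (x : EuclideanSpace ℝ G) :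
    convOp G Y (permIsometry g x) = permIsometry g (convOp G Y x) := by
  ext ω
  simp only [convOp_apply, permIsometry_apply, convAct]
  exact Fintype.sum_equiv (Equiv.mulLeft g⁻¹) _ _ fun h => by simp [mul_smul]

theorem trace_adjoint_comp_convOp (Y : Ω → ℝ) :
    trace ℝ _ (adjoint (convOp G Y) ∘ₗ convOp G Y) = Fintype.card G * ∑ ω, Y ω ^ 2 := by
  classical
  have hcol (g : G) :
      convOp G Y (EuclideanSpace.basisFun G ℝ g) = permIsometry g (WithLp.toLp 2 Y) := by
    ext ω
    simp [convAct]
  rw [trace_eq_sum_inner _ (EuclideanSpace.basisFun G ℝ)]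
  simp only [comp_apply, adjoint_inner_right, real_inner_self_eq_norm_sq, hcol,
    LinearIsometryEquiv.norm_map, EuclideanSpace.real_norm_sq_eq, Finset.sum_const,
    Finset.card_univ, nsmul_eq_mul]

theorem eigenvalue_mul_le_of_sum_eq_zero [MulAction.IsPretransitive G Ω] {d : ℕ}
    (hd : ∀ p : Submodule ℝ (Ω → ℝ), IsNontrivIrredComponent G p → d ≤ finrank ℝ p)
    {Y : Ω → ℝ} (hY : ∑ ω, Y ω = 0) {μ : ℝ}
    (hμ : HasEigenvalue (adjoint (convOp G Y) ∘ₗ convOp G Y) μ) :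
    μ * d ≤ Fintype.card G * ∑ ω, Y ω ^ 2 := by
  set S := convOp G Y
  rcases le_or_gt μ 0 with hμ0 | hμ0
  · exact (mul_nonpos_of_nonpos_of_nonneg hμ0 d.cast_nonneg).trans (by positivity)
  set K := eigenspace (adjoint S ∘ₗ S) μ
  have hnorm : ∀ x ∈ K, ‖S x‖ ^ 2 = μ * ‖x‖ ^ 2 := fun x hx => by
    rw [← real_inner_self_eq_norm_sq, ← adjoint_inner_left, ← comp_apply,
      mem_eigenspace_iff.mp hx, real_inner_smul_left, real_inner_self_eq_norm_sq]
  set p : Submodule ℝ (Ω → ℝ) := K.map ((WithLp.linearEquiv 2 ℝ (Ω → ℝ)).toLinearMap ∘ₗ S)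
  have hp : PermInvariant G p := by
    rintro g _ ⟨x, hx, rfl⟩
    refine ⟨permIsometry g x, map_mem_eigenspace_adjoint_comp_self _
      (permIsometry g).toLinearIsometry (convOp_permIsometry Y g) hx, ?_⟩
    ext ω
    simp [S, convOp_permIsometry]
  have hp0 : p ≠ ⊥ := by
    obtain ⟨x, hxK, hx0⟩ := hμ.exists_hasEigenvector
    have hSx : 0 < ‖S x‖ ^ 2 := by
      rw [hnorm x hxK]
      exact mul_pos hμ0 (pow_pos (norm_pos_iff.mpr hx0) 2)
    refine (Submodule.ne_bot_iff p).mpr ⟨(S x).ofLp, ⟨x, hxK, rfl⟩, fun h => ?_⟩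
    simp [(WithLp.ofLp_eq_zero (p := 2)).mp h] at hSx
  have hsum : ∀ f ∈ p, ∑ ω, f ω = 0 := by
    rintro _ ⟨x, -, rfl⟩
    simp [S, sum_convAct, hY]
  obtain ⟨q, hqp, hq⟩ := exists_isNontrivIrredComponent_le hp hp0 hsum
  have hdK : d ≤ finrank ℝ K :=
    (hd q hq).trans ((Submodule.finrank_mono hqp).trans (Submodule.finrank_map_le _ K))
  calc μ * d ≤ μ * finrank ℝ K := by gcongr
    _ ≤ trace ℝ _ (adjoint S ∘ₗ S) :=
        S.isPositive_adjoint_comp_self.mul_finrank_eigenspace_le_trace μ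
    _ = Fintype.card G * ∑ ω, Y ω ^ 2 := trace_adjoint_comp_convOp Y

theorem sum_sq_convAct_le [MulAction.IsPretransitive G Ω] {d : ℕ} (hd0 : 0 < d)
    (hd : ∀ p : Submodule ℝ (Ω → ℝ), IsNontrivIrredComponent G p → d ≤ finrank ℝ p)
    (X : G → ℝ) {Y : Ω → ℝ} (hY : ∑ ω, Y ω = 0) :
    ∑ ω, convAct X Y ω ^ 2 ≤ Fintype.card G / d * (∑ g, X g ^ 2) * ∑ ω, Y ω ^ 2 := by
  have hd0' : (0 : ℝ) < d := Nat.cast_pos.mpr hd0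
  have h := (isSymmetric_adjoint_comp_self (convOp G Y)).inner_apply_self_le_of_hasEigenvalue_le
    (C := Fintype.card G * (∑ ω, Y ω ^ 2) / d)
    (fun μ hμ => (le_div_iff₀ hd0').mpr (eigenvalue_mul_le_of_sum_eq_zero hd hY hμ))
    (WithLp.toLp 2 X)
  rw [comp_apply, adjoint_inner_left, real_inner_self_eq_norm_sq,
    EuclideanSpace.real_norm_sq_eq, EuclideanSpace.real_norm_sq_eq] at h
  simp only [convOp_apply] at h
  exact h.trans_eq (by ring)

end PermutationRepresentation

theorem sum_sub_inv_card_eq_zero {Ω : Type*} [Fintype Ω] {Y : Ω → ℝ} (hY1 : ∑ ω, Y ω = 1) :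
    ∑ ω, (Y ω - 1 / (Fintype.card Ω : ℝ)) = 0 := by
  have : Nonempty Ω :=
    Finset.univ_nonempty_iff.mp (Finset.nonempty_of_sum_ne_zero (hY1 ▸ one_ne_zero))
  simp [Finset.sum_sub_distrib, hY1]

theorem convolution_bound_dH_general
    {G : Type*} [Group G] [Fintype G] {Ω : Type*} [Fintype Ω]
    [MulAction G Ω] [MulAction.IsPretransitive G Ω]
    (d : ℕ)
    (hd : IsLeast {k : ℕ | ∃ p : Submodule ℝ (Ω → ℝ),
      IsNontrivIrredComponent G p ∧ k = Module.finrank ℝ p} d)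
    (X : G → ℝ) (hX1 : ∑ g : G, X g = 1)
    (Y : Ω → ℝ) (hY1 : ∑ ω : Ω, Y ω = 1) :
    norm2 (fun ω => convAct X Y ω - 1 / (Fintype.card Ω : ℝ)) ≤
      Real.sqrt ((Fintype.card G : ℝ) / (d : ℝ)) *
        norm2 (fun g => X g - 1 / (Fintype.card G : ℝ)) *
        norm2 (fun ω => Y ω - 1 / (Fintype.card Ω : ℝ)) := by
  have hd0 : 0 < d := by
    obtain ⟨⟨p, hp, rfl⟩, -⟩ := hd
    exact Nat.pos_of_ne_zero fun h => hp.2.1 (Submodule.finrank_eq_zero.mp h)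
  have hbound := sum_sq_convAct_le hd0 (fun p hp => hd.2 ⟨p, hp, rfl⟩)
    (fun g => X g - 1 / (Fintype.card G : ℝ)) (sum_sub_inv_card_eq_zero hY1)
  simp only [norm2, convAct_sub_inv_card hX1 hY1]
  rw [← Real.sqrt_mul (by positivity), ← Real.sqrt_mul (by positivity)]
  exact Real.sqrt_le_sqrt hbound

/-- Babai–Nikolov–Pyber-type convolution bound:
`‖X ∗ Y − U_Ω‖ ≤ √(|G|/d_H) · ‖X − U_G‖ · ‖Y − U_Ω‖`, where `d_H` is the minimal degree
of a nontrivial irreducible component of the permutation representation. -/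
theorem convolution_bound_dH
    {G : Type*} [Group G] [Fintype G] {Ω : Type*} [Fintype Ω]
    [MulAction G Ω] [MulAction.IsPretransitive G Ω]
    (d : ℕ)
    (hd : IsLeast {k : ℕ | ∃ p : Submodule ℝ (Ω → ℝ),
      IsNontrivIrredComponent G p ∧ k = Module.finrank ℝ p} d)
    (X : G → ℝ) (hX0 : ∀ g, 0 ≤ X g) (hX1 : ∑ g : G, X g = 1)
    (Y : Ω → ℝ) (hY0 : ∀ ω, 0 ≤ Y ω) (hY1 : ∑ ω : Ω, Y ω = 1) :
    norm2 (fun ω => convAct X Y ω - 1 / (Fintype.card Ω : ℝ)) ≤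
      Real.sqrt ((Fintype.card G : ℝ) / (d : ℝ)) *
        norm2 (fun g => X g - 1 / (Fintype.card G : ℝ)) *
        norm2 (fun ω => Y ω - 1 / (Fintype.card Ω : ℝ)) :=
  convolution_bound_dH_general d hd X hX1 Y hY1
end

section
/- (Gowers) Let G be a finite d-quasirandom group of order n, i.e., every nontrivial complex irreducible representation of G has dimension at least d. If A, B, C ⊆ G satisfy |A|·|B|·|C| > n³/d, then there exist a ∈ A, b ∈ B, c ∈ C with ab = c. -/
/-!
Let `f : G → ℂ` have mean zero and let `T φ = f ∗ φ` be left convolution by `f` on `ℓ²(G)`.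
`T` commutes with the (unitary) right translations and kills the constant functions, so every
eigenspace of `T⋆T` with positive eigenvalue is a right-invariant subspace without nonzero
invariant vectors, hence of dimension at least `d`. For the top eigenvalue `λ` this gives
`d λ ≤ tr (T⋆T) = n ‖f‖²`, that is `d ‖T φ‖² ≤ n ‖f‖² ‖φ‖²`.

Take `f = 1_A - |A|/n`. If `AB ∩ C = ∅`, then `f ∗ 1_B = -|A||B|/n` on `C`, so
`⟪1_C, f ∗ 1_B⟫ = -|A||B||C|/n`, and Cauchy–Schwarz yields
`d (|A||B||C|/n)² ≤ |C| · n |A||B|`, i.e. `|A||B||C| ≤ n³/d`.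
-/

open Module LinearMap Module.End Finset
open scoped InnerProductSpace

def IsQuasirandom (G : Type*) [Monoid G] (d : ℝ) : Prop :=
  ∀ (V : Type) [AddCommGroup V] [Module ℂ V] [FiniteDimensional ℂ V] (ρ : Representation ℂ G V),
    Nontrivial V →
    (∀ p : Submodule ℂ V, (∀ (g : G) (v : V), v ∈ p → ρ g v ∈ p) → p = ⊥ ∨ p = ⊤) →
    (∃ (g : G) (v : V), ρ g v ≠ v) →
    d ≤ (finrank ℂ V : ℝ)

namespace IsQuasirandom

variable {G : Type*} [Monoid G] {d : ℝ}
variable {V : Type*} [AddCommGroup V] [Module ℂ V] [FiniteDimensional ℂ V]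

/-- `IsQuasirandom` only speaks about representations on spaces in `Type`; transport along a
basis removes this restriction. -/
theorem le_finrank (hqr : IsQuasirandom G d) (ρ : Representation ℂ G V) [Nontrivial V]
    (hirr : ∀ p : Submodule ℂ V, (∀ (g : G) (v : V), v ∈ p → ρ g v ∈ p) → p = ⊥ ∨ p = ⊤)
    (hρ : ∃ (g : G) (v : V), ρ g v ≠ v) : d ≤ finrank ℂ V := by
  let e : V ≃ₗ[ℂ] (Fin (finrank ℂ V) → ℂ) := (finBasis ℂ V).equivFun
  let ρ' : Representation ℂ G (Fin (finrank ℂ V) → ℂ) := (e.conjAlgEquiv ℂ).toMonoidHom.comp ρ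
  have hρ' (g : G) (v : V) : ρ' g (e v) = e (ρ g v) := by simp [ρ']
  have : Nontrivial (Fin (finrank ℂ V) → ℂ) := e.symm.toEquiv.nontrivial
  refine (hqr _ ρ' this (fun p hp ↦ ?_) ?_).trans_eq (by simp)
  · have hmap : (p.comap e.toLinearMap).map e.toLinearMap = p :=
      Submodule.map_comap_eq_of_surjective e.surjective p
    rcases hirr (p.comap e.toLinearMap) fun g v hv ↦ by simpa [hρ'] using hp g (e v) hv with h | h
    · left; rw [← hmap, h, Submodule.map_bot]
    · right; rw [← hmap, h, Submodule.map_top, LinearEquiv.range]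
  · obtain ⟨g, v, hv⟩ := hρ
    exact ⟨g, e v, by rwa [hρ', e.injective.ne_iff]⟩

/-- A minimal nonzero invariant subspace of `W` is irreducible and, having no nonzero invariant
vectors, is a nontrivial representation. -/
theorem le_finrank_of_invariant (hqr : IsQuasirandom G d) (ρ : Representation ℂ G V)
    (W : Submodule ℂ V) (hW : W ≠ ⊥) (hWρ : ∀ g, ∀ v ∈ W, ρ g v ∈ W)
    (hfix : ∀ v ∈ W, (∀ g, ρ g v = v) → v = 0) : d ≤ finrank ℂ W := by
  obtain ⟨U, ⟨hU, hUW, hUρ⟩, hmin⟩ := wellFounded_lt.has_min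
    {U : Submodule ℂ V | U ≠ ⊥ ∧ U ≤ W ∧ ∀ g, ∀ v ∈ U, ρ g v ∈ U} ⟨W, hW, le_rfl, hWρ⟩
  have : Nontrivial U := Submodule.nontrivial_iff_ne_bot.mpr hU
  let ρU := ρ.subrepresentation U fun g v hv ↦ hUρ g v hv
  have hirr (p : Submodule ℂ U) (hp : ∀ g, ∀ v ∈ p, ρU g v ∈ p) : p = ⊥ ∨ p = ⊤ := by
    refine or_iff_not_imp_left.mpr fun hp0 ↦ ?_
    have hle : p.map U.subtype ≤ U := Submodule.map_subtype_le U p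
    have hinv : ∀ g, ∀ v ∈ p.map U.subtype, ρ g v ∈ p.map U.subtype := by
      rintro g _ ⟨v, hv, rfl⟩
      exact ⟨ρU g v, hp g v hv, rfl⟩
    have hne : p.map U.subtype ≠ ⊥ := by
      rwa [Ne, ← Submodule.map_bot U.subtype,
        (Submodule.map_injective_of_injective U.injective_subtype).eq_iff]
    have heq : p.map U.subtype = U :=
      hle.eq_of_not_lt (hmin _ ⟨hne, hle.trans hUW, hinv⟩)
    rw [← Submodule.comap_map_eq_of_injective U.injective_subtype p, heq,
      Submodule.comap_subtype_self]
  have hρU : ∃ g v, ρU g v ≠ v := by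
    obtain ⟨u, huU, hu0⟩ := Submodule.exists_mem_ne_zero_of_ne_bot hU
    obtain ⟨g, hg⟩ := not_forall.mp (mt (hfix u (hUW huU)) hu0)
    exact ⟨g, ⟨u, huU⟩, fun h ↦ hg (congrArg Subtype.val h)⟩
  exact (hqr.le_finrank ρU hirr hρU).trans (mod_cast Submodule.finrank_mono hUW)

end IsQuasirandom

namespace LinearMap

variable {𝕜 E F : Type*} [RCLike 𝕜] [NormedAddCommGroup E] [InnerProductSpace 𝕜 E]
  [FiniteDimensional 𝕜 E]

theorem IsSymmetric.re_inner_apply_le {T : E →ₗ[𝕜] E} (hT : T.IsSymmetric) {n : ℕ}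
    (hn : finrank 𝕜 E = n) {c : ℝ} (hc : ∀ i, hT.eigenvalues hn i ≤ c) (v : E) :
    RCLike.re ⟪v, T v⟫_𝕜 ≤ c * ‖v‖ ^ 2 := by
  rw [← (hT.eigenvectorBasis hn).repr.inner_map_map, ← (hT.eigenvectorBasis hn).repr.norm_map,
    EuclideanSpace.norm_sq_eq, Finset.mul_sum, PiLp.inner_apply, map_sum]
  refine Finset.sum_le_sum fun i _ ↦ ?_
  rw [hT.eigenvectorBasis_apply_self_apply, RCLike.inner_apply, mul_assoc, RCLike.mul_conj]
  norm_cast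
  exact mul_le_mul_of_nonneg_right (hc i) (sq_nonneg _)

theorem IsPositive.mul_finrank_eigenspace_le_re_trace {T : E →ₗ[𝕜] E} (hT : T.IsPositive)
    (μ : ℝ) : μ * finrank 𝕜 (eigenspace T μ) ≤ RCLike.re (trace 𝕜 E T) := by
  classical
  rw [hT.isSymmetric.re_trace_eq_sum_eigenvalues rfl,
    ← hT.isSymmetric.card_filter_eigenvalues_eq rfl, ← Finset.sum_filter_add_sum_filter_not _
      fun i ↦ (hT.isSymmetric.eigenvalues rfl i : 𝕜) = μ]
  refine le_add_of_le_of_nonneg (le_of_eq ?_)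
    (Finset.sum_nonneg fun i _ ↦ hT.nonneg_eigenvalues rfl i)
  rw [Finset.sum_congr rfl fun i hi ↦ RCLike.ofReal_inj.mp (Finset.mem_filter.mp hi).2,
    Finset.sum_const, nsmul_eq_mul, mul_comm]

variable [NormedAddCommGroup F] [InnerProductSpace 𝕜 F] [FiniteDimensional 𝕜 F]

theorem re_trace_adjoint_comp_self {ι : Type*} [Fintype ι] (T : E →ₗ[𝕜] F)
    (b : OrthonormalBasis ι 𝕜 E) :
    RCLike.re (trace 𝕜 E (adjoint T ∘ₗ T)) = ∑ i, ‖T (b i)‖ ^ 2 := by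
  simp only [trace_eq_sum_inner _ b, comp_apply, adjoint_inner_right, map_sum,
    inner_self_eq_norm_sq]

end LinearMap

theorem Representation.adjoint_eq_apply_inv {𝕜 G E : Type*} [RCLike 𝕜] [Group G]
    [NormedAddCommGroup E] [InnerProductSpace 𝕜 E] [FiniteDimensional 𝕜 E]
    (ρ : Representation 𝕜 G E) (hρ : ∀ g x y, ⟪ρ g x, ρ g y⟫_𝕜 = ⟪x, y⟫_𝕜) (g : G) :
    adjoint (ρ g) = ρ g⁻¹ :=
  ((LinearMap.eq_adjoint_iff _ _).mpr fun x y ↦ by rw [← hρ g, ρ.self_inv_apply]).symm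

namespace IsQuasirandom

variable {G : Type*} [Group G] {d : ℝ}
variable {E : Type*} [NormedAddCommGroup E] [InnerProductSpace ℂ E] [FiniteDimensional ℂ E]

/-- The top eigenspace of `S` is `ρ`-invariant with no nonzero invariant vectors, so its
eigenvalue `μ` satisfies `μ d ≤ tr S`. -/
theorem mul_re_inner_le (hqr : IsQuasirandom G d) (hd : 0 ≤ d) (ρ : Representation ℂ G E)
    {S : E →ₗ[ℂ] E} (hS : S.IsPositive) (hSρ : ∀ g, S ∘ₗ ρ g = ρ g ∘ₗ S)
    (hfix : ∀ v, (∀ g, ρ g v = v) → S v = 0) (v : E) :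
    d * RCLike.re ⟪v, S v⟫_ℂ ≤ RCLike.re (trace ℂ E S) * ‖v‖ ^ 2 := by
  rcases subsingleton_or_nontrivial E with hE | hE
  · simp [Subsingleton.elim v 0]
  have : Nonempty (Fin (finrank ℂ E)) := ⟨⟨0, finrank_pos⟩⟩
  obtain ⟨i, hi⟩ := Finite.exists_max (hS.isSymmetric.eigenvalues rfl)
  set μ := hS.isSymmetric.eigenvalues rfl i
  have hv := hS.isSymmetric.re_inner_apply_le rfl hi v
  rcases le_or_gt μ 0 with hμ | hμ
  · calc d * RCLike.re ⟪v, S v⟫_ℂ ≤ 0 :=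
          mul_nonpos_of_nonneg_of_nonpos hd (hv.trans (by nlinarith [sq_nonneg ‖v‖]))
      _ ≤ RCLike.re (trace ℂ E S) * ‖v‖ ^ 2 :=
          mul_nonneg (RCLike.nonneg_iff.mp hS.trace_nonneg).1 (sq_nonneg _)
  have hW : eigenspace S μ ≠ ⊥ :=
    hasEigenvalue_iff.mp (hS.isSymmetric.hasEigenvalue_eigenvalues rfl i)
  have hWρ : ∀ g, ∀ w ∈ eigenspace S μ, ρ g w ∈ eigenspace S μ := by
    intro g w hw
    rw [mem_eigenspace_iff] at hw ⊢
    rw [← comp_apply, hSρ, comp_apply, hw, map_smul]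
  have hWfix : ∀ w ∈ eigenspace S μ, (∀ g, ρ g w = w) → w = 0 := by
    intro w hw hwfix
    rw [mem_eigenspace_iff, hfix w hwfix, eq_comm, smul_eq_zero] at hw
    exact hw.resolve_left (by exact_mod_cast hμ.ne')
  have hdW := hqr.le_finrank_of_invariant ρ _ hW hWρ hWfix
  calc d * RCLike.re ⟪v, S v⟫_ℂ ≤ d * (μ * ‖v‖ ^ 2) := mul_le_mul_of_nonneg_left hv hd
    _ = μ * d * ‖v‖ ^ 2 := by ring
    _ ≤ μ * finrank ℂ (eigenspace S μ) * ‖v‖ ^ 2 := by gcongr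
    _ ≤ RCLike.re (trace ℂ E S) * ‖v‖ ^ 2 := by
        gcongr; exact hS.mul_finrank_eigenspace_le_re_trace μ

theorem mul_norm_sq_le (hqr : IsQuasirandom G d) (hd : 0 ≤ d) (ρ : Representation ℂ G E)
    (hρ : ∀ g x y, ⟪ρ g x, ρ g y⟫_ℂ = ⟪x, y⟫_ℂ) {T : E →ₗ[ℂ] E}
    (hTρ : ∀ g, T ∘ₗ ρ g = ρ g ∘ₗ T) (hfix : ∀ v, (∀ g, ρ g v = v) → T v = 0)
    {ι : Type*} [Fintype ι] (b : OrthonormalBasis ι ℂ E) (v : E) :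
    d * ‖T v‖ ^ 2 ≤ (∑ i, ‖T (b i)‖ ^ 2) * ‖v‖ ^ 2 := by
  have hadj (g : G) : adjoint T ∘ₗ ρ g = ρ g ∘ₗ adjoint T := by
    have h := congrArg adjoint (hTρ g⁻¹)
    rwa [adjoint_comp, adjoint_comp, ρ.adjoint_eq_apply_inv hρ, inv_inv, eq_comm] at h
  have hS := hqr.mul_re_inner_le hd ρ (isPositive_adjoint_comp_self T)
    (fun g ↦ by rw [comp_assoc, hTρ, ← comp_assoc, hadj, comp_assoc])
    (fun v hv ↦ by rw [comp_apply, hfix v hv, map_zero]) v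
  rwa [comp_apply, adjoint_inner_right, inner_self_eq_norm_sq,
    re_trace_adjoint_comp_self T b] at hS

end IsQuasirandom

section Convolution

variable {G : Type*} [Group G]

def rightRegular : Representation ℂ G (EuclideanSpace ℂ G) where
  toFun g :=
    { toFun φ := WithLp.toLp 2 fun x ↦ φ (x * g)
      map_add' _ _ := rfl
      map_smul' _ _ := rfl }
  map_one' := by ext; simp
  map_mul' g h := by ext φ x; exact congrArg φ (mul_assoc x g h).symm

@[simp]
theorem rightRegular_apply (g : G) (φ : EuclideanSpace ℂ G) (x : G) :
    rightRegular g φ x = φ (x * g) := rfl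

variable [Fintype G]

theorem inner_rightRegular (g : G) (φ ψ : EuclideanSpace ℂ G) :
    ⟪rightRegular g φ, rightRegular g ψ⟫_ℂ = ⟪φ, ψ⟫_ℂ := by
  simp only [PiLp.inner_apply, rightRegular_apply]
  exact Fintype.sum_equiv (Equiv.mulRight g) _ _ fun _ ↦ rfl

noncomputable def convolutionOperator (f : G → ℂ) :
    EuclideanSpace ℂ G →ₗ[ℂ] EuclideanSpace ℂ G where
  toFun φ := WithLp.toLp 2 fun x ↦ ∑ y, f y * φ (y⁻¹ * x)
  map_add' _ _ := by ext; simp [mul_add, sum_add_distrib]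
  map_smul' _ _ := by ext; simp [mul_sum, mul_left_comm]

@[simp]
theorem convolutionOperator_apply (f : G → ℂ) (φ : EuclideanSpace ℂ G) (x : G) :
    convolutionOperator f φ x = ∑ y, f y * φ (y⁻¹ * x) := rfl

theorem convolutionOperator_comp_rightRegular (f : G → ℂ) (g : G) :
    convolutionOperator f ∘ₗ rightRegular g = rightRegular g ∘ₗ convolutionOperator f := by
  ext φ x
  simp [mul_assoc]

theorem convolutionOperator_eq_zero_of_forall_rightRegular_eq {f : G → ℂ} (hf : ∑ y, f y = 0)
    {φ : EuclideanSpace ℂ G} (hφ : ∀ g, rightRegular g φ = φ) : convolutionOperator f φ = 0 := by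
  have hconst (x : G) : φ x = φ 1 := by simpa using congrArg (· 1) (hφ x)
  ext x
  simp [hconst, ← sum_mul, hf]

theorem norm_sq_convolutionOperator_single [DecidableEq G] (f : G → ℂ) (x : G) :
    ‖convolutionOperator f (EuclideanSpace.single x 1)‖ ^ 2 = ∑ y, ‖f y‖ ^ 2 := by
  rw [EuclideanSpace.norm_sq_eq]
  refine (Fintype.sum_equiv (Equiv.mulRight x) _ _ fun z ↦ ?_).symm
  have hsingle (y : G) : y⁻¹ * (z * x) = x ↔ y = z := by
    rw [← mul_assoc, mul_eq_right, inv_mul_eq_one, eq_comm]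
  simp [PiLp.single_apply, hsingle]

theorem IsQuasirandom.mul_norm_sq_convolutionOperator_le {d : ℝ} (hqr : IsQuasirandom G d)
    (hd : 0 ≤ d) {f : G → ℂ} (hf : ∑ y, f y = 0) (φ : EuclideanSpace ℂ G) :
    d * ‖convolutionOperator f φ‖ ^ 2 ≤ Fintype.card G * (∑ y, ‖f y‖ ^ 2) * ‖φ‖ ^ 2 := by
  classical
  simpa [norm_sq_convolutionOperator_single] using hqr.mul_norm_sq_le hd rightRegular
    inner_rightRegular (convolutionOperator_comp_rightRegular f)
    (fun _ ↦ convolutionOperator_eq_zero_of_forall_rightRegular_eq hf)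
    (EuclideanSpace.basisFun G ℂ) φ

end Convolution

section Indicator

variable {G : Type*} [Fintype G] [DecidableEq G]

def indicatorVector (s : Finset G) : EuclideanSpace ℂ G :=
  WithLp.toLp 2 fun x ↦ if x ∈ s then 1 else 0

theorem norm_sq_indicatorVector (s : Finset G) : ‖indicatorVector s‖ ^ 2 = #s := by
  simp [EuclideanSpace.norm_sq_eq, indicatorVector, apply_ite]

theorem inner_indicatorVector_left (s : Finset G) (φ : EuclideanSpace ℂ G) :
    ⟪indicatorVector s, φ⟫_ℂ = ∑ x ∈ s, φ x := by
  simp [PiLp.inner_apply, indicatorVector, apply_ite, sum_ite_mem]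

noncomputable def balancedIndicator (s : Finset G) (y : G) : ℂ :=
  (((if y ∈ s then 1 else 0) - #s / Fintype.card G : ℝ) : ℂ)

theorem sum_balancedIndicator [Nonempty G] (s : Finset G) : ∑ y, balancedIndicator s y = 0 := by
  have hn : (Fintype.card G : ℂ) ≠ 0 := by simp
  simp [balancedIndicator, ← Complex.ofReal_sum, sum_sub_distrib, mul_div_cancel₀ _ hn]

theorem sum_norm_sq_balancedIndicator_le [Nonempty G] (s : Finset G) :
    ∑ y, ‖balancedIndicator s y‖ ^ 2 ≤ #s := by
  set α : ℝ := #s / Fintype.card G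
  have hsq (y : G) :
      ‖balancedIndicator s y‖ ^ 2 = (if y ∈ s then 1 - 2 * α else 0) + α ^ 2 := by
    rw [balancedIndicator, Complex.norm_real, Real.norm_eq_abs, sq_abs]
    split_ifs <;> ring
  have hα : Fintype.card G * α = #s := mul_div_cancel₀ _ (by positivity)
  simp only [hsq, sum_add_distrib, sum_ite_mem, univ_inter, sum_const, card_univ, nsmul_eq_mul]
  nlinarith [show 0 ≤ α by positivity]

theorem convolutionOperator_balancedIndicator_apply [Group G] (A B : Finset G) (x : G) :
    convolutionOperator (balancedIndicator A) (indicatorVector B) x =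
      #{y | y ∈ A ∧ y⁻¹ * x ∈ B} - #A * #B / Fintype.card G := by
  have hB : #{y | y⁻¹ * x ∈ B} = #B := by
    refine card_nbij' (fun y ↦ y⁻¹ * x) (fun b ↦ x * b⁻¹) (fun y hy ↦ ?_) (fun b hb ↦ ?_)
      (fun y _ ↦ ?_) (fun b _ ↦ ?_) <;> simp_all
  have hterm (y : G) : balancedIndicator A y * indicatorVector B (y⁻¹ * x) =
      (if y ∈ A ∧ y⁻¹ * x ∈ B then 1 else 0) -
        #A / Fintype.card G * (if y⁻¹ * x ∈ B then 1 else 0) := by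
    simp only [balancedIndicator, indicatorVector]
    split_ifs <;> simp_all
  simp only [convolutionOperator_apply, hterm, sum_sub_distrib, ← mul_sum, sum_boole, hB]
  ring

end Indicator

theorem inner_indicatorVector_convolutionOperator_of_forall_mul_notMem {G : Type*} [Group G]
    [Fintype G] [DecidableEq G] {A B C : Finset G} (hABC : ∀ a ∈ A, ∀ b ∈ B, a * b ∉ C) :
    ⟪indicatorVector C, convolutionOperator (balancedIndicator A) (indicatorVector B)⟫_ℂ =
      -(#A * #B * #C / Fintype.card G : ℝ) := by
  have hC : ∀ c ∈ C, convolutionOperator (balancedIndicator A) (indicatorVector B) c =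
      -(#A * #B / Fintype.card G : ℝ) := fun c hc ↦ by
    rw [convolutionOperator_balancedIndicator_apply, filter_false_of_mem fun a _ ⟨ha, hb⟩ ↦
      hABC a ha _ hb (by rwa [mul_inv_cancel_left]), card_empty]
    push_cast; ring
  rw [inner_indicatorVector_left, sum_congr rfl hC, sum_const, nsmul_eq_mul]
  push_cast; ring

theorem IsQuasirandom.card_mul_card_mul_card_le {G : Type*} [Group G] [Fintype G]
    [DecidableEq G] {d : ℝ} (hqr : IsQuasirandom G d) (hd : 0 < d) {A B C : Finset G}
    (hABC : ∀ a ∈ A, ∀ b ∈ B, a * b ∉ C) :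
    (#A * #B * #C : ℝ) ≤ Fintype.card G ^ 3 / d := by
  set n : ℝ := (Fintype.card G : ℝ)
  set x : ℝ := #A * #B * #C
  set φ := convolutionOperator (balancedIndicator A) (indicatorVector B)
  have hCS : (x / n) ^ 2 ≤ #C * ‖φ‖ ^ 2 := by
    have hinner : ‖⟪indicatorVector C, φ⟫_ℂ‖ = x / n := by
      rw [inner_indicatorVector_convolutionOperator_of_forall_mul_notMem hABC, norm_neg,
        Complex.norm_real, Real.norm_eq_abs, abs_of_nonneg (by positivity)]
    rw [← hinner, ← norm_sq_indicatorVector, ← mul_pow]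
    exact pow_le_pow_left₀ (norm_nonneg _) (norm_inner_le_norm _ _) 2
  have hφ : d * ‖φ‖ ^ 2 ≤ n * #A * #B := by
    calc d * ‖φ‖ ^ 2
        ≤ n * (∑ y, ‖balancedIndicator A y‖ ^ 2) * ‖indicatorVector B‖ ^ 2 :=
          hqr.mul_norm_sq_convolutionOperator_le hd.le (sum_balancedIndicator A) _
      _ ≤ n * #A * #B := by
          rw [norm_sq_indicatorVector]; gcongr; exact sum_norm_sq_balancedIndicator_le A
  have hn : 0 < n := by positivity
  have hx : d * x ^ 2 ≤ n ^ 3 * x := by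
    calc d * x ^ 2 = n ^ 2 * (d * (x / n) ^ 2) := by field_simp
      _ ≤ n ^ 2 * (d * (#C * ‖φ‖ ^ 2)) := by gcongr
      _ = n ^ 2 * #C * (d * ‖φ‖ ^ 2) := by ring
      _ ≤ n ^ 2 * #C * (n * #A * #B) := by gcongr
      _ = n ^ 3 * x := by ring
  rw [le_div_iff₀ hd]
  rcases (show 0 ≤ x by positivity).eq_or_lt with hx0 | hx0
  · rw [← hx0, zero_mul]; positivity
  · nlinarith

/-- Gowers' theorem: in a finite `d`-quasirandom group `G` of order `n` (every
nontrivial complex irreducible representation has dimension at least `d`), any three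
subsets `A, B, C` with `|A||B||C| > n³/d` satisfy `AB ∩ C ≠ ∅`. -/
theorem gowers_quasirandom_group
    {G : Type*} [Group G] [Fintype G] [DecidableEq G]
    (d : ℝ) (hd : 0 < d)
    (hqr : ∀ (V : Type) [AddCommGroup V] [Module ℂ V] [FiniteDimensional ℂ V]
      (ρ : Representation ℂ G V),
      Nontrivial V →
      (∀ p : Submodule ℂ V, (∀ (g : G) (v : V), v ∈ p → ρ g v ∈ p) → p = ⊥ ∨ p = ⊤) →
      (∃ (g : G) (v : V), ρ g v ≠ v) →
      d ≤ (Module.finrank ℂ V : ℝ))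
    (A B C : Finset G)
    (h : ((A.card : ℝ) * (B.card : ℝ) * (C.card : ℝ)) > (Fintype.card G : ℝ) ^ 3 / d) :
    ∃ a ∈ A, ∃ b ∈ B, ∃ c ∈ C, a * b = c := by
  by_contra hno
  exact h.not_ge (IsQuasirandom.card_mul_card_mul_card_le hqr hd
    fun a ha b hb hab ↦ hno ⟨a, ha, b, hb, _, hab, rfl⟩)
end

section
/- Let G be a finite group acting transitively on Ω, let δ > 0, and let S ⊆ G satisfy |S| ≥ (2+δ)|G|/d_H. Then the Schreier graph Sch(G, Ω, S) is an ε-expander with ε = δ/(4+δ): for every Γ ⊆ Ω with |Γ| ≤ |Ω|/2, the number of edges from Γ to its complement is at least ε|Γ|. -/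
/-!
Let `f = 𝟙_Γ - (|Γ|/|Ω|)·𝟙`, which is orthogonal to the constants, and `F = ‖f‖² ≥ |Γ|/2`.
Since `G` fixes the constants, each `s ∈ S` contributes `F - ⟪s·f, f⟫` boundary edges.
The frame operator `A = ∑_g |g·f⟩⟨g·f|` commutes with `G` and has trace `|G|·F`, so each
positive eigenvalue `μ` has a `G`-invariant eigenspace orthogonal to the constants, of dimension
at least `d_H`; hence `μ ≤ |G|·F/d_H` and `∑_g ⟪g·f, f⟫² = ⟪A f, f⟫ ≤ |G|·F²/d_H`.
Cauchy–Schwarz over `S` and `|S| ≥ (2+δ)|G|/d_H` give `(2+δ)·(∑_{s ∈ S} ⟪s·f, f⟫)² ≤ (|S|·F)²`,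
and since `|S| ≥ 2+δ` the boundary `|S|·F - ∑_{s ∈ S} ⟪s·f, f⟫` is at least
`(1+δ)·F/2 ≥ δ·|Γ|/(4+δ)`.
-/

open scoped BigOperators

open Module Finset InnerProductSpace
open scoped RealInnerProductSpace

theorem sub_one_mul_le_of_mul_sq_le {a x T : ℝ} (ha : 1 ≤ a) (hx : 0 ≤ x) (hT : a * T ^ 2 ≤ x ^ 2) :
    (a - 1) * x ≤ 2 * a * (x - T) := by
  have hTx : T ≤ x := abs_le_of_sq_le_sq' (by nlinarith) hx |>.2
  rcases hx.eq_or_lt with rfl | hx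
  · nlinarith
  · nlinarith [mul_le_mul_of_nonneg_left (by linarith : x + T ≤ 2 * x) (sub_nonneg.2 hTx)]

theorem div_mul_le_sub_of_mul_sq_le {δ σ F T c : ℝ} (hδ : 0 < δ) (hσ : 2 + δ ≤ σ) (hF : 0 ≤ F)
    (hc : c ≤ 2 * F) (hT : (2 + δ) * T ^ 2 ≤ (σ * F) ^ 2) : δ / (4 + δ) * c ≤ σ * F - T := by
  have hmain := sub_one_mul_le_of_mul_sq_le (by linarith) (mul_nonneg (by linarith) hF) hT
  have hcoef : δ / (4 + δ) * 2 ≤ (1 + δ) / 2 := by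
    rw [div_mul_eq_mul_div, div_le_div_iff₀ (by positivity) two_pos]
    nlinarith
  calc δ / (4 + δ) * c ≤ δ / (4 + δ) * (2 * F) := by gcongr
    _ ≤ (1 + δ) / 2 * F := by rw [← mul_assoc]; gcongr
    _ ≤ σ * F - T := by nlinarith [mul_le_mul_of_nonneg_right hσ hF]

theorem mul_sq_sum_le_of_mul_sum_sq_le {ι : Type*} [Fintype ι] (a : ι → ℝ) (S : Finset ι)
    {d k M : ℝ} (hd : 0 < d) (hk : 0 ≤ k) (hM : 0 ≤ M) (ha : d * ∑ i, a i ^ 2 ≤ Fintype.card ι * M)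
    (hS : k * Fintype.card ι ≤ #S * d) : k * (∑ i ∈ S, a i) ^ 2 ≤ (#S : ℝ) ^ 2 * M := by
  have hCS : (∑ i ∈ S, a i) ^ 2 ≤ (#S : ℝ) * ∑ i, a i ^ 2 := by
    refine sq_sum_le_card_mul_sum_sq.trans ?_
    gcongr
    exact Finset.subset_univ S
  refine le_of_mul_le_mul_left ?_ hd
  calc d * (k * (∑ i ∈ S, a i) ^ 2) ≤ k * #S * (d * ∑ i, a i ^ 2) := by
        nlinarith [mul_le_mul_of_nonneg_left hCS (mul_nonneg hd.le hk)]
    _ ≤ k * #S * (Fintype.card ι * M) := by gcongr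
    _ = #S * M * (k * Fintype.card ι) := by ring
    _ ≤ #S * M * (#S * d) := by gcongr
    _ = d * (#S ^ 2 * M) := by ring

section SymmetricOperator

variable {E : Type*} [NormedAddCommGroup E] [InnerProductSpace ℝ E] [FiniteDimensional ℝ E]

theorem LinearMap.IsSymmetric.inner_map_self_le {T : E →ₗ[ℝ] E} (hT : T.IsSymmetric) {c : ℝ}
    (hc : ∀ μ, End.HasEigenvalue T μ → μ ≤ c) (x : E) : ⟪T x, x⟫ ≤ c * ‖x‖ ^ 2 := by
  let b := hT.eigenvectorBasis rfl
  have hTb : ∀ i, ⟪T x, b i⟫ = hT.eigenvalues rfl i * ⟪x, b i⟫ := fun i => by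
    rw [hT, hT.apply_eigenvectorBasis, real_inner_smul_right]
    rfl
  calc ⟪T x, x⟫ = ∑ i, hT.eigenvalues rfl i * ⟪x, b i⟫ ^ 2 := by
        rw [← b.sum_inner_mul_inner]
        refine Finset.sum_congr rfl fun i _ => ?_
        rw [hTb, real_inner_comm x (b i), sq, mul_assoc]
    _ ≤ ∑ i, c * ⟪x, b i⟫ ^ 2 :=
        Finset.sum_le_sum fun i _ =>
          mul_le_mul_of_nonneg_right (hc _ (hT.hasEigenvalue_eigenvalues rfl i)) (sq_nonneg _)
    _ = c * ‖x‖ ^ 2 := by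
        rw [← Finset.mul_sum, ← real_inner_self_eq_norm_sq, ← b.sum_inner_mul_inner]
        simp only [sq, real_inner_comm x]

end SymmetricOperator

section FrameOperator

variable {ι E : Type*} [Fintype ι] [NormedAddCommGroup E] [InnerProductSpace ℝ E]

noncomputable def frameOperator (v : ι → E) : E →ₗ[ℝ] E :=
  ∑ i, (rankOne ℝ (v i) (v i) : E →ₗ[ℝ] E)

theorem frameOperator_apply (v : ι → E) (x : E) :
    frameOperator v x = ∑ i, ⟪v i, x⟫ • v i := by
  simp [frameOperator]

theorem inner_frameOperator_apply (v : ι → E) (x y : E) :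
    ⟪frameOperator v x, y⟫ = ∑ i, ⟪v i, x⟫ * ⟪v i, y⟫ := by
  simp [frameOperator_apply, sum_inner, real_inner_smul_left]

theorem isSymmetric_frameOperator (v : ι → E) : (frameOperator v).IsSymmetric := fun x y => by
  rw [inner_frameOperator_apply, real_inner_comm, inner_frameOperator_apply]
  exact Finset.sum_congr rfl fun i _ => mul_comm _ _

theorem eigenspace_frameOperator_le_span {v : ι → E} {μ : ℝ} (hμ : μ ≠ 0) :
    End.eigenspace (frameOperator v) μ ≤ Submodule.span ℝ (Set.range v) := by
  intro x hx
  rw [End.mem_eigenspace_iff] at hx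
  have : x = μ⁻¹ • frameOperator v x := by rw [hx, inv_smul_smul₀ hμ]
  rw [this, frameOperator_apply]
  exact Submodule.smul_mem _ _ (Submodule.sum_mem _ fun i _ =>
    Submodule.smul_mem _ _ (Submodule.subset_span ⟨i, rfl⟩))

theorem mul_finrank_eigenspace_frameOperator_le [FiniteDimensional ℝ E] (v : ι → E) (μ : ℝ) :
    μ * finrank ℝ (End.eigenspace (frameOperator v) μ) ≤ ∑ i, ‖v i‖ ^ 2 := by
  set W := End.eigenspace (frameOperator v) μ
  let c := stdOrthonormalBasis ℝ W
  have hc : Orthonormal ℝ fun j => (c j : E) :=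
    c.orthonormal.comp_linearIsometry W.subtypeₗᵢ
  have hμ : ∀ j, ∑ i, ⟪v i, (c j : E)⟫ ^ 2 = μ := fun j => by
    have := inner_frameOperator_apply v (c j) (c j)
    rw [End.mem_eigenspace_iff.mp (c j).2, real_inner_smul_left, real_inner_self_eq_norm_sq,
      hc.1 j, one_pow, mul_one] at this
    simpa only [sq] using this.symm
  calc μ * finrank ℝ W = ∑ j, ∑ i, ⟪v i, (c j : E)⟫ ^ 2 := by simp [hμ, mul_comm]
    _ = ∑ i, ∑ j, ⟪(c j : E), v i⟫ ^ 2 := by rw [Finset.sum_comm]; simp only [real_inner_comm]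
    _ ≤ ∑ i, ‖v i‖ ^ 2 := Finset.sum_le_sum fun i _ => by
        simpa [Real.norm_eq_abs, sq_abs] using hc.sum_inner_products_le (v i) (s := Finset.univ)

end FrameOperator

theorem LinearIsometryEquiv.norm_sq_sub_inner_map_sub_of_map_eq {E : Type*} [NormedAddCommGroup E]
    [InnerProductSpace ℝ E] (T : E ≃ₗᵢ[ℝ] E) (x : E) {c : E} (hc : T c = c) :
    ‖x - c‖ ^ 2 - ⟪T (x - c), x - c⟫ = ‖x‖ ^ 2 - ⟪T x, x⟫ := by
  have hTx : ⟪T x, c⟫ = ⟪x, c⟫ := by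
    conv_lhs => rw [← hc]
    exact T.inner_map_map x c
  rw [map_sub, hc, ← real_inner_self_eq_norm_sq, ← real_inner_self_eq_norm_sq]
  simp only [inner_sub_left, inner_sub_right, hTx, real_inner_comm x c]
  ring

section OrthogonalRepresentation

variable {G E : Type*} [Group G] [Fintype G] [NormedAddCommGroup E] [InnerProductSpace ℝ E]
  (ρ : G →* (E ≃ₗᵢ[ℝ] E))

theorem frameOperator_orbit_map (f x : E) (h : G) :
    frameOperator (fun g => ρ g f) (ρ h x) = ρ h (frameOperator (fun g => ρ g f) x) := by
  simp only [frameOperator_apply, map_sum, map_smul]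
  refine Fintype.sum_equiv (Equiv.mulLeft h⁻¹) _ _ fun g => ?_
  have hg : ρ h (ρ (h⁻¹ * g) f) = ρ g f := by
    rw [← Function.comp_apply (f := ρ h), ← LinearIsometryEquiv.coe_mul, ← map_mul,
      mul_inv_cancel_left]
  rw [Equiv.coe_mulLeft, ← hg, LinearIsometryEquiv.inner_map_map]

theorem map_mem_eigenspace_frameOperator_orbit (f : E) {μ : ℝ} (g : G) {x : E}
    (hx : x ∈ End.eigenspace (frameOperator fun g => ρ g f) μ) :
    ρ g x ∈ End.eigenspace (frameOperator fun g => ρ g f) μ := by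
  rw [End.mem_eigenspace_iff] at hx ⊢
  rw [frameOperator_orbit_map, hx, map_smul]

theorem mul_sum_inner_orbit_sq_le [FiniteDimensional ℝ E] (f : E) {d : ℕ}
    (hd : ∀ W : Submodule ℝ E, W ≠ ⊥ → (∀ g, ∀ x ∈ W, ρ g x ∈ W) →
      W ≤ Submodule.span ℝ (Set.range fun g => ρ g f) → d ≤ finrank ℝ W) :
    d * ∑ g, ⟪ρ g f, f⟫ ^ 2 ≤ Fintype.card G * ‖f‖ ^ 4 := by
  rcases Nat.eq_zero_or_pos d with rfl | hd0
  · simp only [CharP.cast_eq_zero, zero_mul]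
    positivity
  set A := frameOperator fun g => ρ g f
  have heig : ∀ μ, End.HasEigenvalue A μ → μ ≤ Fintype.card G * ‖f‖ ^ 2 / d := by
    intro μ hμ
    rcases le_or_gt μ 0 with hμ0 | hμ0
    · exact hμ0.trans (by positivity)
    have hdW := hd _ (End.hasEigenvalue_iff.mp hμ)
      (fun g _ => map_mem_eigenspace_frameOperator_orbit ρ f g)
      (eigenspace_frameOperator_le_span hμ0.ne')
    rw [le_div_iff₀ (by positivity)]
    calc μ * d ≤ μ * finrank ℝ (End.eigenspace A μ) := by gcongr
      _ ≤ ∑ g, ‖ρ g f‖ ^ 2 := mul_finrank_eigenspace_frameOperator_le _ μ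
      _ = Fintype.card G * ‖f‖ ^ 2 := by simp
  have hRay := (isSymmetric_frameOperator _).inner_map_self_le heig f
  rw [inner_frameOperator_apply] at hRay
  calc (d : ℝ) * ∑ g, ⟪ρ g f, f⟫ ^ 2 ≤ d * (Fintype.card G * ‖f‖ ^ 2 / d * ‖f‖ ^ 2) := by
        simpa only [sq] using mul_le_mul_of_nonneg_left hRay (Nat.cast_nonneg d)
    _ = Fintype.card G * ‖f‖ ^ 4 := by field_simp

end OrthogonalRepresentation

section PermutationRepresentation

variable (G Ω : Type*) [Group G] [Fintype Ω] [MulAction G Ω]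

noncomputable def permRep : G →* (EuclideanSpace ℝ Ω ≃ₗᵢ[ℝ] EuclideanSpace ℝ Ω) where
  toFun g := LinearIsometryEquiv.piLpCongrLeft 2 ℝ ℝ (MulAction.toPerm g)
  map_one' := by ext; simp [Equiv.piCongrLeft']
  map_mul' g h := by ext; simp [Equiv.piCongrLeft', mul_smul]

variable {G Ω}

@[simp]
theorem permRep_apply (g : G) (x : EuclideanSpace ℝ Ω) (ω : Ω) :
    permRep G Ω g x ω = x (g⁻¹ • ω) :=
  rfl

theorem sum_eq_zero_of_mem_span_orbit {f : EuclideanSpace ℝ Ω} (hf : ∑ ω, f ω = 0)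
    {x : EuclideanSpace ℝ Ω} (hx : x ∈ Submodule.span ℝ (Set.range fun g => permRep G Ω g f)) :
    ∑ ω, x ω = 0 := by
  induction hx using Submodule.span_induction with
  | mem _ hy =>
    obtain ⟨g, rfl⟩ := hy
    simpa using (Equiv.sum_comp (MulAction.toPerm g⁻¹) f).trans hf
  | zero => simp
  | add _ _ _ _ hx hy => simp [Finset.sum_add_distrib, hx, hy]
  | smul a _ _ hx => simp [← Finset.mul_sum, hx]

variable [MulAction.IsPretransitive G Ω]

theorem card_le_card_of_isPretransitive [Fintype G] : Fintype.card Ω ≤ Fintype.card G := by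
  cases isEmpty_or_nonempty Ω with
  | inl _ => simp
  | inr h =>
    obtain ⟨ω₀⟩ := h
    exact Fintype.card_le_of_surjective (· • ω₀) (MulAction.exists_smul_eq G ω₀)

theorem eq_zero_of_forall_comp_smul_eq {x : Ω → ℝ} (hx : ∀ g : G, (fun ω => x (g⁻¹ • ω)) = x)
    (hsum : ∑ ω, x ω = 0) : x = 0 := by
  funext ω
  have hconst : ∀ ω', x ω' = x ω := fun ω' => by
    obtain ⟨g, rfl⟩ := MulAction.exists_smul_eq G ω ω'
    simpa using congrFun (hx g⁻¹) ω
  have hcard : (Fintype.card Ω : ℝ) ≠ 0 := by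
    have : Nonempty Ω := ⟨ω⟩
    positivity
  have : (Fintype.card Ω : ℝ) * x ω = 0 := by
    rw [← hsum, Finset.sum_congr rfl fun ω' _ => hconst ω', Finset.sum_const, nsmul_eq_mul,
      Finset.card_univ]
  exact (mul_eq_zero.mp this).resolve_left hcard

theorem le_finrank_of_permInvariant {d : ℕ}
    (hd : ∀ q : Submodule ℝ (Ω → ℝ), IsNontrivIrredComponent G q → d ≤ finrank ℝ q)
    {p : Submodule ℝ (Ω → ℝ)} (hp : PermInvariant G p) (hp0 : p ≠ ⊥)
    (hsum : ∀ x ∈ p, ∑ ω, x ω = 0) : d ≤ finrank ℝ p := by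
  obtain ⟨q, ⟨hqp, hq, hq0⟩, hmin⟩ := wellFounded_lt.has_min
    {q : Submodule ℝ (Ω → ℝ) | q ≤ p ∧ PermInvariant G q ∧ q ≠ ⊥} ⟨p, le_rfl, hp, hp0⟩
  have hirred : IsNontrivIrredComponent G q := by
    refine ⟨hq, hq0, fun q' hq'q hq' => ?_, ?_⟩
    · by_contra! h
      exact hmin q' ⟨hq'q.trans hqp, hq', h.1⟩ (lt_of_le_of_ne hq'q h.2)
    · by_contra! hfix
      exact hq0 ((Submodule.eq_bot_iff q).2 fun x hx =>
        eq_zero_of_forall_comp_smul_eq (fun g => hfix g x hx) (hsum x (hqp hx)))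
  exact (hd q hirred).trans (Submodule.finrank_mono hqp)

theorem le_finrank_of_le_span_orbit {d : ℕ}
    (hd : ∀ q : Submodule ℝ (Ω → ℝ), IsNontrivIrredComponent G q → d ≤ finrank ℝ q)
    {f : EuclideanSpace ℝ Ω} (hf : ∑ ω, f ω = 0) (W : Submodule ℝ (EuclideanSpace ℝ Ω))
    (hW0 : W ≠ ⊥) (hW : ∀ g, ∀ x ∈ W, permRep G Ω g x ∈ W)
    (hWf : W ≤ Submodule.span ℝ (Set.range fun g => permRep G Ω g f)) :
    d ≤ finrank ℝ W := by
  let e := WithLp.linearEquiv 2 ℝ (Ω → ℝ)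
  rw [← e.finrank_map_eq W]
  refine le_finrank_of_permInvariant hd (fun g x hx => ?_) (by simpa using hW0) fun x hx => ?_
  · rw [Submodule.mem_map_equiv] at hx ⊢
    exact hW g _ hx
  · rw [Submodule.mem_map_equiv] at hx
    exact sum_eq_zero_of_mem_span_orbit hf (hWf hx)

end PermutationRepresentation

section EdgeCount

variable {G Ω : Type*} [Group G] [Fintype Ω] [DecidableEq Ω] [MulAction G Ω]

noncomputable def indicatorVec (Γ : Finset Ω) : EuclideanSpace ℝ Ω :=
  WithLp.toLp 2 fun ω => if ω ∈ Γ then 1 else 0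

theorem inner_permRep_indicatorVec (s : G) (Γ Δ : Finset Ω) :
    ⟪permRep G Ω s (indicatorVec Γ), indicatorVec Δ⟫ = #{γ ∈ Γ | s • γ ∈ Δ} := by
  rw [PiLp.inner_apply, ← Equiv.sum_comp (MulAction.toPerm s)]
  simp [indicatorVec, Finset.sum_boole]

theorem inner_indicatorVec (Γ Δ : Finset Ω) :
    ⟪indicatorVec Γ, indicatorVec Δ⟫ = #(Γ ∩ Δ) := by
  simp [PiLp.inner_apply, indicatorVec]

theorem inner_indicatorVec_univ (x : EuclideanSpace ℝ Ω) :
    ⟪x, indicatorVec univ⟫ = ∑ ω, x ω := by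
  simp [PiLp.inner_apply, indicatorVec]

@[simp]
theorem permRep_indicatorVec_univ (g : G) :
    permRep G Ω g (indicatorVec univ) = indicatorVec univ := by
  ext; simp [indicatorVec]

theorem card_filter_smul_not_mem (s : G) (Γ : Finset Ω) :
    (#{γ ∈ Γ | s • γ ∉ Γ} : ℝ) =
      ‖indicatorVec Γ‖ ^ 2 - ⟪permRep G Ω s (indicatorVec Γ), indicatorVec Γ⟫ := by
  rw [← real_inner_self_eq_norm_sq, inner_indicatorVec, inner_permRep_indicatorVec,
    Finset.inter_self, ← Finset.card_filter_add_card_filter_not (s := Γ) (fun γ => s • γ ∈ Γ)]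
  push_cast
  ring

noncomputable def centeredIndicator (Γ : Finset Ω) : EuclideanSpace ℝ Ω :=
  indicatorVec Γ - (#Γ / Fintype.card Ω : ℝ) • indicatorVec univ

theorem sum_centeredIndicator (Γ : Finset Ω) : ∑ ω, centeredIndicator Γ ω = 0 := by
  rw [← inner_indicatorVec_univ, centeredIndicator, inner_sub_left, real_inner_smul_left,
    inner_indicatorVec, inner_indicatorVec, Finset.inter_univ, Finset.inter_self, Finset.card_univ]
  rcases Nat.eq_zero_or_pos (Fintype.card Ω) with h | h
  · simp [Finset.card_eq_zero.mp (Nat.le_zero.mp (h ▸ Finset.card_le_univ Γ))]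
  · field_simp
    ring

theorem norm_sq_centeredIndicator (Γ : Finset Ω) :
    ‖centeredIndicator Γ‖ ^ 2 = #Γ * (1 - #Γ / Fintype.card Ω) := by
  rw [← real_inner_self_eq_norm_sq]
  nth_rw 2 [centeredIndicator]
  rw [inner_sub_right, real_inner_smul_right, inner_indicatorVec_univ, sum_centeredIndicator,
    centeredIndicator, inner_sub_left, real_inner_smul_left, inner_indicatorVec,
    inner_indicatorVec, Finset.inter_self, Finset.univ_inter]
  ring

theorem card_boundary_eq_sum (Γ : Finset Ω) (S : Finset G) :
    (#{p ∈ Γ ×ˢ S | p.2 • p.1 ∉ Γ} : ℝ) = ∑ s ∈ S,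
      (‖centeredIndicator Γ‖ ^ 2 - ⟪permRep G Ω s (centeredIndicator Γ), centeredIndicator Γ⟫) := by
  have hcount : #{p ∈ Γ ×ˢ S | p.2 • p.1 ∉ Γ} = ∑ s ∈ S, #{γ ∈ Γ | s • γ ∉ Γ} := by
    rw [Finset.card_filter, Finset.sum_product, Finset.sum_comm]
    exact Finset.sum_congr rfl fun s _ => (Finset.card_filter _ _).symm
  rw [hcount, Nat.cast_sum]
  refine Finset.sum_congr rfl fun s _ => ?_
  rw [card_filter_smul_not_mem, centeredIndicator,
    LinearIsometryEquiv.norm_sq_sub_inner_map_sub_of_map_eq _ _ (by simp)]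

theorem card_le_two_mul_norm_sq_centeredIndicator {Γ : Finset Ω}
    (hΓ : (#Γ : ℝ) ≤ Fintype.card Ω / 2) : (#Γ : ℝ) ≤ 2 * ‖centeredIndicator Γ‖ ^ 2 := by
  have hratio : (#Γ : ℝ) / Fintype.card Ω ≤ 1 / 2 := by
    rcases (Nat.cast_nonneg (α := ℝ) (Fintype.card Ω)).eq_or_lt with h | h
    · simp [← h]
    · rw [div_le_iff₀ h]
      linarith
  rw [norm_sq_centeredIndicator]
  nlinarith [Nat.cast_nonneg (α := ℝ) #Γ]

end EdgeCount

/-- Expansion of Schreier graphs: if `|S| ≥ (2+δ)|G|/d_H`, then for every `Γ ⊆ Ω` with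
`|Γ| ≤ |Ω|/2`, the number of Schreier-graph edges from `Γ` to its complement (pairs
`(γ, s)` with `γ ∈ Γ`, `s ∈ S`, `s • γ ∉ Γ`) is at least `(δ/(4+δ))·|Γ|`. -/
theorem schreier_graph_expander
    {G : Type*} [Group G] [Fintype G] {Ω : Type*} [Fintype Ω] [DecidableEq Ω]
    [MulAction G Ω] [MulAction.IsPretransitive G Ω]
    (d : ℕ)
    (hd : IsLeast {k : ℕ | ∃ p : Submodule ℝ (Ω → ℝ),
      IsNontrivIrredComponent G p ∧ k = Module.finrank ℝ p} d)
    (δ : ℝ) (hδ : 0 < δ)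
    (S : Finset G) (hS : (S.card : ℝ) ≥ (2 + δ) * (Fintype.card G : ℝ) / (d : ℝ)) :
    ∀ Γ : Finset Ω, (Γ.card : ℝ) ≤ (Fintype.card Ω : ℝ) / 2 →
      ((((Γ ×ˢ S).filter (fun p : Ω × G => p.2 • p.1 ∉ Γ)).card : ℝ)) ≥
        (δ / (4 + δ)) * (Γ.card : ℝ) := by
  intro Γ hΓ
  obtain ⟨⟨p, hp, hdp⟩, hd⟩ := hd
  have hd_le (q : Submodule ℝ (Ω → ℝ)) (hq : IsNontrivIrredComponent G q) : d ≤ finrank ℝ q :=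
    hd ⟨q, hq, rfl⟩
  have hd_pos : (0 : ℝ) < d := by
    rw [hdp]
    exact_mod_cast Submodule.one_le_finrank_iff.mpr hp.2.1
  have hd_card : (d : ℝ) ≤ Fintype.card G := by
    rw [hdp]
    exact_mod_cast p.finrank_le.trans
      ((finrank_fintype_fun_eq_card ℝ).trans_le card_le_card_of_isPretransitive)
  have hSd : (2 + δ) * Fintype.card G ≤ #S * d := by rwa [ge_iff_le, div_le_iff₀ hd_pos] at hS
  have hS_ge : 2 + δ ≤ #S :=
    le_of_mul_le_mul_right (hSd.trans (by gcongr)) (hd_pos.trans_le hd_card)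
  have hspec := mul_sum_inner_orbit_sq_le (permRep G Ω) (centeredIndicator Γ)
    (le_finrank_of_le_span_orbit hd_le (sum_centeredIndicator Γ))
  have hT := mul_sq_sum_le_of_mul_sum_sq_le _ S hd_pos (by linarith) (by positivity) hspec hSd
  rw [ge_iff_le, card_boundary_eq_sum, Finset.sum_sub_distrib, Finset.sum_const, nsmul_eq_mul]
  refine div_mul_le_sub_of_mul_sq_le hδ hS_ge (sq_nonneg _)
    (card_le_two_mul_norm_sq_centeredIndicator hΓ) ?_
  convert hT using 1
  ring
end

section
/- Let q be a prime power and A ⊆ F_q \ {0}. If |A| ≥ q^{2/3}, then |A + A·A| > q/2, where A + A·A = {a + bc : a, b, c ∈ A}. -/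
/-!
Put `σ (a, b, c) = a + b * c` on `A³` and let `K` count the pairs of triples with the same value
of `σ`. Cauchy–Schwarz over the fibres of `σ` gives `|A|⁶ ≤ |A + A·A| · K`. Expanding `q K` with a
primitive additive character `ψ`, the character sum of `σ` at a frequency `u` factors as
`(∑ₐ ψ (u a)) · ∑_{b,c} ψ (u b c)`. For `u ≠ 0` the second factor has square at most `q |A|²`
(Cauchy–Schwarz in `b`, then Parseval in `c` after substituting `v = u b`), while Parseval gives
`∑_{u ≠ 0} |∑ₐ ψ (u a)|² = q |A| - |A|²`. Hence `q K ≤ |A|⁶ + q² |A|³ - q |A|⁴`, which is less than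
`2 |A|⁶` as soon as `q² ≤ |A|³`, so `|A + A·A| > q / 2`.
-/

open Finset

def collisions {ι β : Type*} [DecidableEq β] (T : Finset ι) (σ : ι → β) : Finset (ι × ι) :=
  {p ∈ T ×ˢ T | σ p.1 = σ p.2}

section Collisions
variable {ι β : Type*} [DecidableEq β]

lemma card_collisions_eq_sum_sq (T : Finset ι) (σ : ι → β) :
    #(collisions T σ) = ∑ x ∈ T.image σ, #{t ∈ T | σ t = x} ^ 2 := by
  rw [card_eq_sum_card_fiberwise (f := fun p => σ p.1) (t := T.image σ)]
  · refine sum_congr rfl fun x _ => ?_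
    rw [sq, ← card_product]
    congr 1
    ext ⟨t, t'⟩
    simp only [collisions, mem_filter, mem_product]
    grind
  · exact fun p hp => mem_image_of_mem σ (mem_product.mp (mem_filter.mp hp).1).1

lemma sq_card_le_card_image_mul_card_collisions (T : Finset ι) (σ : ι → β) :
    #T ^ 2 ≤ #(T.image σ) * #(collisions T σ) := by
  rw [card_collisions_eq_sum_sq, card_eq_sum_card_image σ T]
  exact sq_sum_le_card_mul_sum_sq

end Collisions

lemma sq_norm_sum_le_card_mul_sum_sq_norm {ι E : Type*} [SeminormedAddCommGroup E]
    (s : Finset ι) (w : ι → E) : ‖∑ i ∈ s, w i‖ ^ 2 ≤ #s * ∑ i ∈ s, ‖w i‖ ^ 2 :=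
  (pow_le_pow_left₀ (norm_nonneg _) (norm_sum_le s w) 2).trans sq_sum_le_card_mul_sum_sq

namespace AddChar.IsPrimitive

section Ring
variable {R : Type*} [CommRing R] [Fintype R] [DecidableEq R] {ψ : AddChar R ℂ}

lemma sum_sq_norm_sum_eq_card_mul_card_collisions (hψ : ψ.IsPrimitive) {ι : Type*}
    (T : Finset ι) (σ : ι → R) :
    ∑ u, ‖∑ t ∈ T, ψ (u * σ t)‖ ^ 2 = Fintype.card R * #(collisions T σ) := by
  have hcomplex : ∑ u, ((‖∑ t ∈ T, ψ (u * σ t)‖ ^ 2 : ℝ) : ℂ) =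
      Fintype.card R * #(collisions T σ) := by
    calc ∑ u, ((‖∑ t ∈ T, ψ (u * σ t)‖ ^ 2 : ℝ) : ℂ)
        = ∑ u, ∑ t ∈ T, ∑ t' ∈ T, ψ (u * (σ t - σ t')) := by
          refine sum_congr rfl fun u _ => ?_
          rw [Complex.ofReal_pow, ← Complex.mul_conj', map_sum, sum_mul_sum]
          refine sum_congr rfl fun t _ => sum_congr rfl fun t' _ => ?_
          rw [← map_neg_eq_conj, ← map_add_eq_mul, mul_sub, sub_eq_add_neg]
      _ = ∑ p ∈ T ×ˢ T, ∑ u, ψ (u * (σ p.1 - σ p.2)) := by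
          rw [sum_comm, sum_product]
          exact sum_congr rfl fun t _ => sum_comm
      _ = ∑ p ∈ T ×ˢ T, if σ p.1 = σ p.2 then (Fintype.card R : ℂ) else 0 := by
          simp_rw [sum_mulShift _ hψ, sub_eq_zero, apply_ite (Nat.cast : ℕ → ℂ), Nat.cast_zero]
      _ = Fintype.card R * #(collisions T σ) := by
          rw [← sum_filter, sum_const, nsmul_eq_mul, mul_comm, collisions]
  exact_mod_cast hcomplex

lemma sum_sq_norm_sum_eq_card_mul_card (hψ : ψ.IsPrimitive) (B : Finset R) :
    ∑ u, ‖∑ b ∈ B, ψ (u * b)‖ ^ 2 = Fintype.card R * #B := by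
  simpa [collisions, ← diag_eq_filter] using hψ.sum_sq_norm_sum_eq_card_mul_card_collisions B id

lemma sum_erase_zero_sq_norm_sum_eq (hψ : ψ.IsPrimitive) (B : Finset R) :
    ∑ u ∈ univ.erase 0, ‖∑ b ∈ B, ψ (u * b)‖ ^ 2 = Fintype.card R * #B - #B ^ 2 := by
  rw [← hψ.sum_sq_norm_sum_eq_card_mul_card B, ← add_sum_erase _ _ (mem_univ 0)]
  simp

end Ring

section Field
variable {F : Type*} [Field F] [Fintype F] [DecidableEq F] {ψ : AddChar F ℂ}

lemma sq_norm_sum_sum_mul_mul_le (hψ : ψ.IsPrimitive) {u : F} (hu : u ≠ 0)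
    (B C : Finset F) :
    ‖∑ b ∈ B, ∑ c ∈ C, ψ (u * (b * c))‖ ^ 2 ≤ #B * (Fintype.card F * #C) := by
  calc ‖∑ b ∈ B, ∑ c ∈ C, ψ (u * (b * c))‖ ^ 2
      ≤ #B * ∑ b ∈ B, ‖∑ c ∈ C, ψ (u * b * c)‖ ^ 2 := by
        simp_rw [← mul_assoc]; exact sq_norm_sum_le_card_mul_sum_sq_norm _ _
    _ ≤ #B * ∑ b, ‖∑ c ∈ C, ψ (u * b * c)‖ ^ 2 := by
        gcongr
        exact subset_univ B
    _ = #B * (Fintype.card F * #C) := by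
        rw [Fintype.sum_bijective _ (mulLeft_bijective₀ u hu) _
          (fun v => ‖∑ c ∈ C, ψ (v * c)‖ ^ 2) fun _ => rfl,
          hψ.sum_sq_norm_sum_eq_card_mul_card]

end Field
end AddChar.IsPrimitive

lemma AddChar.sum_product_add_mul_eq_mul {R R' : Type*} [Semiring R] [CommSemiring R']
    (ψ : AddChar R R') (u : R) (A B C : Finset R) :
    ∑ t ∈ A ×ˢ B ×ˢ C, ψ (u * (t.1 + t.2.1 * t.2.2)) =
      (∑ a ∈ A, ψ (u * a)) * ∑ b ∈ B, ∑ c ∈ C, ψ (u * (b * c)) := by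
  simp_rw [sum_product, mul_add, AddChar.map_add_eq_mul, sum_mul_sum, mul_sum]

lemma image_product_add_mul_eq_image₂ {R : Type*} [Add R] [Mul R] [DecidableEq R]
    (A B C : Finset R) :
    (A ×ˢ B ×ˢ C).image (fun t => t.1 + t.2.1 * t.2.2) =
      image₂ (· + ·) A (image₂ (· * ·) B C) := by
  ext x; simp [mem_image₂, and_assoc]

lemma card_mul_card_collisions_add_mul_le {F : Type*} [Field F] [Fintype F] [DecidableEq F]
    (A B C : Finset F) :
    (Fintype.card F : ℝ) * #(collisions (A ×ˢ B ×ˢ C) fun t => t.1 + t.2.1 * t.2.2) ≤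
      (#A * #B * #C : ℝ) ^ 2 +
        (Fintype.card F * #A - #A ^ 2) * (#B * (Fintype.card F * #C)) := by
  have hψ := AddChar.FiniteField.primitiveChar_to_Complex_isPrimitive F
  rw [← hψ.sum_sq_norm_sum_eq_card_mul_card_collisions, ← add_sum_erase _ _ (mem_univ 0),
    ← hψ.sum_erase_zero_sq_norm_sum_eq, sum_mul]
  simp_rw [AddChar.sum_product_add_mul_eq_mul, norm_mul, mul_pow]
  refine add_le_add (by simp [mul_pow, mul_assoc]) (sum_le_sum fun u hu => ?_)
  gcongr
  exact hψ.sq_norm_sum_sum_mul_mul_le (ne_of_mem_erase hu) B C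

theorem sum_product_large_sets_general
    {F : Type*} [Field F] [Fintype F] [DecidableEq F]
    (A : Finset F)
    (hA : (A.card : ℝ) ≥ (Fintype.card F : ℝ) ^ ((2 : ℝ) / 3)) :
    ((Finset.image₂ (· + ·) A (Finset.image₂ (· * ·) A A)).card : ℝ) >
      (Fintype.card F : ℝ) / 2 := by
  set S := image₂ (· + ·) A (image₂ (· * ·) A A)
  set K := collisions (A ×ˢ A ×ˢ A) fun t => t.1 + t.2.1 * t.2.2
  have hCS : ((#A : ℝ) * #A * #A) ^ 2 ≤ #S * #K := by
    have := sq_card_le_card_image_mul_card_collisions (A ×ˢ A ×ˢ A)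
      fun t => t.1 + t.2.1 * t.2.2
    rw [image_product_add_mul_eq_image₂, card_product, card_product, ← mul_assoc] at this
    exact_mod_cast this
  have hE := card_mul_card_collisions_add_mul_le A A A
  set q : ℝ := (Fintype.card F : ℝ)
  set n : ℝ := (#A : ℝ)
  have hq : 0 < q := by positivity
  have hn : 0 < n := hA.trans_lt' (by positivity)
  have hqn : q ^ 2 ≤ n ^ 3 :=
    calc q ^ 2 = (q ^ (2 / 3 : ℝ)) ^ 3 := by
          rw [← Real.rpow_natCast _ 3, ← Real.rpow_mul hq.le, ← Real.rpow_natCast q 2]; norm_num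
      _ ≤ n ^ 3 := by gcongr
  have hD : (n * n * n) ^ 2 + (q * n - n ^ 2) * (n * (q * n)) < 2 * (n * n * n) ^ 2 := by
    nlinarith [mul_le_mul_of_nonneg_right hqn (pow_pos hn 3).le, pow_pos hn 4]
  have hSK : q * (n * n * n) ^ 2 ≤
      #S * ((n * n * n) ^ 2 + (q * n - n ^ 2) * (n * (q * n))) :=
    calc q * (n * n * n) ^ 2 ≤ #S * (q * #K) := by linarith [mul_le_mul_of_nonneg_left hCS hq.le]
      _ ≤ _ := by gcongr
  by_contra! h
  nlinarith [pow_pos hn 6]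

/-- Sum-product for large sets in finite fields: if `A ⊆ F_q \ {0}` and `|A| ≥ q^{2/3}`,
then `|A + A·A| > q/2`. -/
theorem sum_product_large_sets
    {F : Type*} [Field F] [Fintype F] [DecidableEq F]
    (A : Finset F) (hA0 : (0 : F) ∉ A)
    (hA : (A.card : ℝ) ≥ (Fintype.card F : ℝ) ^ ((2 : ℝ) / 3)) :
    ((Finset.image₂ (· + ·) A (Finset.image₂ (· * ·) A A)).card : ℝ) >
      (Fintype.card F : ℝ) / 2 :=
  sum_product_large_sets_general A hA
end

section
/- Let q be a prime power, 0 < δ < 1/6, and A ⊆ F_q \ {0} with |A| = q^{1/2+δ}. Then |A + A·A| > (1/2)·q^{1/2+3δ}. -/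
open Finset

/-!
Let `E` be the number of solutions of `a + b c = a' + b' c'` with all variables in `A`.
Cauchy–Schwarz over the fibres of `(a, b, c) ↦ a + b c` gives `|A|⁶ ≤ |A + A·A| · E`.
Expanding with a primitive additive character `ψ`, `q E = ∑ₓ |∑ ψ(x (a + b c))|²`. The
frequency `x = 0` contributes `|A|⁶`. For `x ≠ 0` the inner sum factors as
`(∑ₐ ψ(x a)) · (∑_{b,c} ψ(x b c))`; Cauchy–Schwarz in `b` followed by Parseval (as `c ↦ x c`
is injective) bounds the bilinear factor by `q |A|²`, and Parseval for the first factor gives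
`q E ≤ |A|⁶ + q² |A|³`. Hence `|A + A·A| ≥ q |A|³ / (|A|³ + q²)`, and for
`|A| = q^(1/2 + δ)` the right-hand side exceeds `q^(1/2 + 3δ) / 2` as soon as `δ < 1/6`.
-/

section Collisions

variable {ι β : Type*} [DecidableEq β]

def collisionCount (s : Finset ι) (f : ι → β) : ℕ := #{p ∈ s ×ˢ s | f p.1 = f p.2}

theorem collisionCount_eq_sum_sq (s : Finset ι) (f : ι → β) :
    collisionCount s f = ∑ b ∈ s.image f, #{i ∈ s | f i = b} ^ 2 := by
  rw [collisionCount, card_eq_sum_card_fiberwise (f := fun p => f p.1) (t := s.image f)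
    fun p hp => mem_image_of_mem f (mem_product.1 (mem_filter.1 hp).1).1]
  refine sum_congr rfl fun b _ => ?_
  rw [sq, ← card_product, filter_filter]
  congr 1
  ext ⟨i, j⟩
  simp only [mem_filter, mem_product]
  constructor
  · rintro ⟨⟨hi, hj⟩, hij, rfl⟩
    exact ⟨⟨hi, rfl⟩, hj, hij.symm⟩
  · rintro ⟨⟨hi, rfl⟩, hj, hij⟩
    exact ⟨⟨hi, hj⟩, hij.symm, rfl⟩

theorem sq_card_le_card_image_mul_collisionCount (s : Finset ι) (f : ι → β) :
    #s ^ 2 ≤ #(s.image f) * collisionCount s f := by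
  rw [card_eq_sum_card_image f s, collisionCount_eq_sum_sq]
  exact sq_sum_le_card_mul_sum_sq

theorem collisionCount_eq_card_of_injOn {s : Finset ι} {f : ι → β} (hf : Set.InjOn f s) :
    collisionCount s f = #s := by
  rw [collisionCount, ← diag_card s]
  congr 1
  ext ⟨i, j⟩
  simp only [mem_filter, mem_product, mem_diag]
  constructor
  · rintro ⟨⟨hi, hj⟩, hij⟩
    exact ⟨hi, hf hi hj hij⟩
  · rintro ⟨hi, rfl⟩
    exact ⟨⟨hi, hi⟩, rfl⟩

end Collisions

theorem image_add_mul_eq_image₂ {α : Type*} [Add α] [Mul α] [DecidableEq α]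
    (A B C : Finset α) :
    (A ×ˢ B ×ˢ C).image (fun p => p.1 + p.2.1 * p.2.2) =
      image₂ (· + ·) A (image₂ (· * ·) B C) := by
  ext y
  simp only [mem_image, mem_image₂, mem_product, Prod.exists]
  constructor
  · rintro ⟨a, b, c, ⟨ha, hb, hc⟩, rfl⟩
    exact ⟨a, ha, b * c, ⟨b, hb, c, hc, rfl⟩, rfl⟩
  · rintro ⟨a, ha, _, ⟨b, hb, c, hc, rfl⟩, rfl⟩
    exact ⟨a, b, c, ⟨ha, hb, hc⟩, rfl⟩

theorem sum_addChar_mul_add_mul {R M : Type*} [CommRing R] [CommSemiring M] (ψ : AddChar R M)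
    (x : R) (A B C : Finset R) :
    ∑ p ∈ A ×ˢ B ×ˢ C, ψ (x * (p.1 + p.2.1 * p.2.2)) =
      (∑ a ∈ A, ψ (x * a)) * ∑ b ∈ B, ∑ c ∈ C, ψ (x * (b * c)) := by
  rw [sum_product, sum_mul]
  refine sum_congr rfl fun a _ => ?_
  rw [sum_product, mul_sum]
  simp only [mul_sum, ← AddChar.map_add_eq_mul, mul_add]

theorem sum_normSq_sum_addChar_mul {R : Type*} [CommRing R] [Fintype R] [DecidableEq R]
    {ψ : AddChar R ℂ} (hψ : ψ.IsPrimitive) {ι : Type*} (s : Finset ι) (f : ι → R) :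
    ∑ x, Complex.normSq (∑ i ∈ s, ψ (x * f i)) = Fintype.card R * collisionCount s f := by
  apply Complex.ofReal_injective
  push_cast
  calc ∑ x, (Complex.normSq (∑ i ∈ s, ψ (x * f i)) : ℂ)
      = ∑ x, ∑ p ∈ s ×ˢ s, ψ (x * (f p.1 - f p.2)) := by
        refine sum_congr rfl fun x _ => ?_
        rw [← Complex.mul_conj, map_sum, sum_mul_sum, ← sum_product']
        refine sum_congr rfl fun p _ => ?_
        rw [← AddChar.map_neg_eq_conj, ← AddChar.map_add_eq_mul, mul_sub, sub_eq_add_neg]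
    _ = ∑ p ∈ s ×ˢ s, ∑ x, ψ (x * (f p.1 - f p.2)) := sum_comm
    _ = ∑ p ∈ s ×ˢ s, if f p.1 = f p.2 then (Fintype.card R : ℂ) else 0 := by
        simp only [AddChar.sum_mulShift _ hψ, sub_eq_zero, apply_ite Nat.cast, Nat.cast_zero]
    _ = Fintype.card R * collisionCount s f := by
        rw [collisionCount, card_filter]
        push_cast
        simp only [mul_sum, mul_boole]

section CharacterSums

variable {F : Type*} [Field F] [Fintype F] [DecidableEq F] {ψ : AddChar F ℂ}

theorem normSq_sum_sum_addChar_mul_le (hψ : ψ.IsPrimitive) {x : F} (hx : x ≠ 0)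
    (B C : Finset F) :
    Complex.normSq (∑ b ∈ B, ∑ c ∈ C, ψ (x * (b * c))) ≤ Fintype.card F * #B * #C := by
  set g : F → ℂ := fun b => ∑ c ∈ C, ψ (b * (x * c))
  have hg : ∑ b, Complex.normSq (g b) = Fintype.card F * #C := by
    rw [sum_normSq_sum_addChar_mul hψ, collisionCount_eq_card_of_injOn
      fun c _ d _ h => mul_left_cancel₀ hx h]
  calc Complex.normSq (∑ b ∈ B, ∑ c ∈ C, ψ (x * (b * c)))
      = ‖∑ b ∈ B, g b‖ ^ 2 := by
        simp only [g, Complex.normSq_eq_norm_sq, mul_left_comm x]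
    _ ≤ (∑ b ∈ B, ‖g b‖) ^ 2 := by gcongr; exact norm_sum_le _ _
    _ ≤ #B * ∑ b ∈ B, ‖g b‖ ^ 2 := sq_sum_le_card_mul_sum_sq
    _ ≤ #B * ∑ b, ‖g b‖ ^ 2 := by
        gcongr ?_ * ?_
        exact sum_le_sum_of_subset_of_nonneg (subset_univ B) fun _ _ _ => by positivity
    _ = Fintype.card F * #B * #C := by
        simp only [← Complex.normSq_eq_norm_sq, hg]
        ring

theorem card_mul_collisionCount_add_mul_le (hψ : ψ.IsPrimitive) (A B C : Finset F) :
    Fintype.card F * collisionCount (A ×ˢ B ×ˢ C) (fun p => p.1 + p.2.1 * p.2.2) ≤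
      (#A * #B * #C : ℝ) ^ 2 + (Fintype.card F : ℝ) ^ 2 * (#A * #B * #C) := by
  set q : ℝ := (Fintype.card F : ℝ)
  set Â : F → ℝ := fun x => Complex.normSq (∑ a ∈ A, ψ (x * a))
  have hÂ : ∑ x, Â x = q * #A := by
    rw [sum_normSq_sum_addChar_mul hψ, collisionCount_eq_card_of_injOn fun _ _ _ _ h => h]
  have h_zero : Complex.normSq (∑ p ∈ A ×ˢ B ×ˢ C, ψ (0 * (p.1 + p.2.1 * p.2.2))) =
      (#A * #B * #C : ℝ) ^ 2 := by
    simp only [zero_mul, AddChar.map_zero_eq_one, sum_const, card_product, nsmul_one,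
      Complex.normSq_natCast]
    push_cast
    ring
  have h_nonzero : ∀ x ∈ univ.erase (0 : F),
      Complex.normSq (∑ p ∈ A ×ˢ B ×ˢ C, ψ (x * (p.1 + p.2.1 * p.2.2))) ≤
        q * (#B * #C) * Â x := by
    intro x hx
    rw [sum_addChar_mul_add_mul ψ, Complex.normSq_mul, mul_comm]
    have := normSq_sum_sum_addChar_mul_le hψ (ne_of_mem_erase hx) B C
    gcongr
    · exact Complex.normSq_nonneg _
    · simpa only [mul_assoc] using this
  -- the frequency `0` gives the main term `N²`; all others factor as `Â x` times a bilinear sum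
  rw [← sum_normSq_sum_addChar_mul hψ, ← add_sum_erase _ _ (mem_univ 0), h_zero]
  gcongr
  calc _ ≤ ∑ x ∈ univ.erase 0, q * (#B * #C) * Â x := sum_le_sum h_nonzero
    _ ≤ ∑ x, q * (#B * #C) * Â x :=
        sum_le_sum_of_subset_of_nonneg (subset_univ _) fun _ _ _ =>
          mul_nonneg (by positivity) (Complex.normSq_nonneg _)
    _ = _ := by rw [← mul_sum, hÂ]; ring

end CharacterSums

theorem card_mul_le_card_image₂_add_mul_mul {F : Type*} [Field F] [Fintype F] [DecidableEq F]
    (A B C : Finset F) :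
    (Fintype.card F : ℝ) * (#A * #B * #C) ≤
      #(image₂ (· + ·) A (image₂ (· * ·) B C)) * (#A * #B * #C + (Fintype.card F : ℝ) ^ 2) := by
  obtain ⟨ψ, hψ⟩ : ∃ ψ : AddChar F ℂ, ψ.IsPrimitive :=
    ⟨_, AddChar.FiniteField.primitiveChar_to_Complex_isPrimitive F⟩
  have h_cs := sq_card_le_card_image_mul_collisionCount (A ×ˢ B ×ˢ C)
    (fun p => p.1 + p.2.1 * p.2.2)
  rw [image_add_mul_eq_image₂, card_product, card_product, ← mul_assoc] at h_cs
  replace h_cs := (Nat.cast_le (α := ℝ)).2 h_cs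
  have h_energy := card_mul_collisionCount_add_mul_le hψ A B C
  push_cast at h_cs
  set q : ℝ := (Fintype.card F : ℝ)
  set S : ℝ := (#(image₂ (· + ·) A (image₂ (· * ·) B C)) : ℝ)
  set E : ℝ := (collisionCount (A ×ˢ B ×ˢ C) (fun p => p.1 + p.2.1 * p.2.2) : ℝ)
  set N : ℝ := (#A : ℝ) * #B * #C
  rcases (by positivity : 0 ≤ N).eq_or_lt with hN | hN
  · rw [← hN, mul_zero]
    positivity
  refine le_of_mul_le_mul_left ?_ hN
  calc N * (q * N) = q * N ^ 2 := by ring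
    _ ≤ q * (S * E) := by gcongr
    _ = S * (q * E) := by ring
    _ ≤ S * (N ^ 2 + q ^ 2 * N) := by gcongr
    _ = N * (S * (N + q ^ 2)) := by ring

theorem sum_product_medium_sets_general
    {F : Type*} [Field F] [Fintype F] [DecidableEq F]
    (δ : ℝ) (hδ' : δ < 1 / 6)
    (A : Finset F)
    (hA : (A.card : ℝ) = (Fintype.card F : ℝ) ^ ((1 : ℝ) / 2 + δ)) :
    ((Finset.image₂ (· + ·) A (Finset.image₂ (· * ·) A A)).card : ℝ) >
      (1 / 2) * (Fintype.card F : ℝ) ^ ((1 : ℝ) / 2 + 3 * δ) := by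
  -- With `t = q ^ (1/2 + 3δ)` we get `|A|³ = t q`, so the key bound reads
  -- `|A + A·A| ≥ q t / (t + q)`, which exceeds `t / 2` exactly because `t < q`.
  have key := card_mul_le_card_image₂_add_mul_mul A A A
  set q : ℝ := (Fintype.card F : ℝ)
  set t : ℝ := q ^ ((1 : ℝ) / 2 + 3 * δ)
  have hq : 1 < q := Nat.one_lt_cast.2 Fintype.one_lt_card
  have ht : 0 < t := by positivity
  have htq : t < q := by
    simpa only [Real.rpow_one] using
      Real.rpow_lt_rpow_of_exponent_lt hq (by linarith : (1 : ℝ) / 2 + 3 * δ < 1)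
  have hN : (#A : ℝ) * #A * #A = t * q := by
    rw [hA, ← Real.rpow_add (by positivity), ← Real.rpow_add (by positivity),
      ← Real.rpow_add_one (by positivity)]
    ring_nf
  rw [hN] at key
  have h_lt : 1 / 2 * t * (t * q + q ^ 2) < q * (t * q) := by
    nlinarith [mul_pos ht (by positivity : 0 < q)]
  exact lt_of_mul_lt_mul_right (h_lt.trans_le key) (by positivity)

/-- Sum-product for large sets in finite fields: if `A ⊆ F_q \ {0}` and
`|A| = q^{1/2+δ}` with `0 < δ < 1/6`, then `|A + A·A| > (1/2)·q^{1/2+3δ}`. -/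
theorem sum_product_medium_sets
    {F : Type*} [Field F] [Fintype F] [DecidableEq F]
    (δ : ℝ) (hδ : 0 < δ) (hδ' : δ < 1 / 6)
    (A : Finset F) (hA0 : (0 : F) ∉ A)
    (hA : (A.card : ℝ) = (Fintype.card F : ℝ) ^ ((1 : ℝ) / 2 + δ)) :
    ((Finset.image₂ (· + ·) A (Finset.image₂ (· * ·) A A)).card : ℝ) >
      (1 / 2) * (Fintype.card F : ℝ) ^ ((1 : ℝ) / 2 + 3 * δ) :=
  sum_product_medium_sets_general δ hδ' A hA
end
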